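/- arXiv:1611.07201 — 8 statements merged into one kernel-verified Lean document; each statement's English description precedes it below -/
import Mathlib

section
/- With L, M̄, M, Π_I, α, 𝕊, Ŝ as in the context, assume in addition that √α L + M̄ Π_I is invertible (so that Ŝ is invertible). Then the rank of I − Ŝ⁻¹ 𝕊 is at most 2r, where r is the number of indices i with (Π_I)_{ii} = 1. -/
open Matrix

private lemma matrix_rank_add_le {n : ℕ} (A B : Matrix (Fin n) (Fin n) ℝ) :
    (A + B).rank ≤ A.rank + B.rank := by
  unfold Matrix.rank
  rw [Matrix.mulVecLin_add]
  have hle : LinearMap.range (A.mulVecLin + B.mulVecLin) ≤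
      LinearMap.range A.mulVecLin ⊔ LinearMap.range B.mulVecLin := by
    rintro x ⟨y, rfl⟩
    exact Submodule.add_mem_sup (LinearMap.mem_range_self _ y)
      (LinearMap.mem_range_self _ y)
  exact le_trans (Submodule.finrank_mono hle)
    (Submodule.finrank_add_le_finrank_add_finrank _ _)

set_option maxHeartbeats 1000000 in
/-- rank(I − Ŝ⁻¹𝕊) ≤ 2r, r = number of inactive indices
(diagonal ones of Π_I). -/
theorem stmt_3 (n : ℕ) (hn : 1 ≤ n)
    (L Mb M Pi : Matrix (Fin n) (Fin n) ℝ)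
    (hM : M.IsDiag) (hMpos : ∀ i, 0 < M i i)
    (hPi : Pi.IsDiag) (hPi01 : ∀ i, Pi i i = 0 ∨ Pi i i = 1)
    (α : ℝ) (hα : 0 < α)
    (hinv : IsUnit (Real.sqrt α • L + Mb * Pi).det) :
    let S : Matrix (Fin n) (Fin n) ℝ :=
      α • (L * M⁻¹ * Lᵀ) + Mb * Pi * M⁻¹ * Mbᵀ
    let Sh : Matrix (Fin n) (Fin n) ℝ :=
      (Real.sqrt α • L + Mb * Pi) * M⁻¹ * (Real.sqrt α • L + Mb * Pi)ᵀ
    Matrix.rank (1 - Sh⁻¹ * S) ≤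
      2 * (Finset.univ.filter (fun i => Pi i i = 1)).card := by
  intro S Sh
  set d : Fin n → ℝ := fun i => M i i with hd
  set p : Fin n → ℝ := fun i => Pi i i with hp
  have hMd : M = diagonal d := hM.diagonal_diag.symm
  have hPd : Pi = diagonal p := hPi.diagonal_diag.symm
  have hMinv : M⁻¹ = diagonal fun i => (d i)⁻¹ := by
    apply Matrix.inv_eq_right_inv
    rw [hMd, diagonal_mul_diagonal,
      show (fun i => d i * (d i)⁻¹) = fun _ => 1 from
        funext fun i => mul_inv_cancel₀ (hMpos i).ne', diagonal_one]
  -- transpose of Pi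
  have hPt : Piᵀ = Pi := by rw [hPd, diagonal_transpose]
  -- Pi * M⁻¹ * Pi = Pi * M⁻¹
  have hPMP : Pi * M⁻¹ * Pi = Pi * M⁻¹ := by
    rw [hPd, hMinv, diagonal_mul_diagonal, diagonal_mul_diagonal]
    have h3 : (fun i => p i * (d i)⁻¹ * p i) = fun i => p i * (d i)⁻¹ := by
      funext i
      rcases hPi01 i with h | h <;> rw [show p i = _ from h] <;> ring
    rw [h3]
  -- invertibility of Sh
  have hMdet : IsUnit M⁻¹.det := by
    rw [hMinv, det_diagonal]
    refine (Finset.prod_ne_zero_iff.mpr fun i _ => ?_).isUnit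
    exact inv_ne_zero (hMpos i).ne'
  have hShdet : IsUnit Sh.det := by
    show IsUnit ((Real.sqrt α • L + Mb * Pi) * M⁻¹ *
      (Real.sqrt α • L + Mb * Pi)ᵀ).det
    rw [det_mul, det_mul, det_transpose]
    exact (hinv.mul hMdet).mul hinv
  have hunit : Sh⁻¹ * Sh = 1 := Matrix.nonsing_inv_mul Sh hShdet
  -- Sh - S
  have hsq : Real.sqrt α * Real.sqrt α = α := Real.mul_self_sqrt hα.le
  have hdiff : Sh - S =
      ((Real.sqrt α • (L * M⁻¹)) * Pi) * Mbᵀ +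
      ((Real.sqrt α • Mb) * Pi) * (M⁻¹ * Lᵀ) := by
    show (Real.sqrt α • L + Mb * Pi) * M⁻¹ * (Real.sqrt α • L + Mb * Pi)ᵀ -
        (α • (L * M⁻¹ * Lᵀ) + Mb * Pi * M⁻¹ * Mbᵀ) = _
    rw [transpose_add, transpose_smul, Matrix.transpose_mul, hPt]
    have expand : (Real.sqrt α • L + Mb * Pi) * M⁻¹ *
        (Real.sqrt α • Lᵀ + Pi * Mbᵀ) =
        (Real.sqrt α * Real.sqrt α) • (L * M⁻¹ * Lᵀ) +
        Real.sqrt α • (L * M⁻¹ * (Pi * Mbᵀ)) +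
        Real.sqrt α • (Mb * Pi * M⁻¹ * Lᵀ) +
        Mb * (Pi * M⁻¹ * Pi) * Mbᵀ := by
      simp only [Matrix.add_mul, Matrix.mul_add, Matrix.smul_mul,
        Matrix.mul_smul, smul_smul, smul_add, Matrix.mul_assoc]
      abel
    rw [expand, hsq, hPMP]
    simp only [Matrix.smul_mul, Matrix.mul_smul, Matrix.mul_assoc]
    abel
  -- rewrite 1 - Sh⁻¹ S
  have key : 1 - Sh⁻¹ * S = Sh⁻¹ * (Sh - S) := by
    rw [Matrix.mul_sub, hunit]
  rw [key, hdiff]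
  -- rank of Pi
  have hrankPi : Pi.rank ≤ (Finset.univ.filter fun i => Pi i i = 1).card := by
    rw [hPd, Matrix.rank_diagonal, Fintype.card_subtype]
    apply le_of_eq
    congr 1
    ext i
    simp only [Finset.mem_filter, Finset.mem_univ, true_and]
    rcases hPi01 i with h | h <;> simp [hp] at h ⊢ <;> simp [h]
  calc Matrix.rank (Sh⁻¹ * (((Real.sqrt α • (L * M⁻¹)) * Pi) * Mbᵀ +
        ((Real.sqrt α • Mb) * Pi) * (M⁻¹ * Lᵀ)))
      ≤ Matrix.rank (((Real.sqrt α • (L * M⁻¹)) * Pi) * Mbᵀ +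
        ((Real.sqrt α • Mb) * Pi) * (M⁻¹ * Lᵀ)) := Matrix.rank_mul_le_right _ _
    _ ≤ Matrix.rank (((Real.sqrt α • (L * M⁻¹)) * Pi) * Mbᵀ) +
        Matrix.rank (((Real.sqrt α • Mb) * Pi) * (M⁻¹ * Lᵀ)) :=
        matrix_rank_add_le _ _
    _ ≤ Pi.rank + Pi.rank := by
        gcongr
        · exact le_trans (Matrix.rank_mul_le_left _ _)
            (Matrix.rank_mul_le_right _ _)
        · exact le_trans (Matrix.rank_mul_le_left _ _)
            (Matrix.rank_mul_le_right _ _)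
    _ ≤ 2 * (Finset.univ.filter fun i => Pi i i = 1).card := by omega
end

section
/- With L, M̄, M, Π_I, α, 𝕊, Ŝ as in the context, assume in addition that √α L + M̄ Π_I is invertible (so that Ŝ is invertible). Then the matrix Ŝ⁻¹ 𝕊 has at least n − 2r unit eigenvalues, in the sense that the kernel of Ŝ⁻¹ 𝕊 − I has dimension at least n − 2r, where r is the number of indices i with (Π_I)_{ii} = 1. -/
open Matrix

lemma rank_add_le' {n m : ℕ} (A B : Matrix (Fin m) (Fin n) ℝ) :
    (A + B).rank ≤ A.rank + B.rank := by
  have h : LinearMap.range (A + B).mulVecLin ≤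
      LinearMap.range A.mulVecLin ⊔ LinearMap.range B.mulVecLin := by
    rintro x ⟨v, rfl⟩
    exact Submodule.mem_sup.2 ⟨A.mulVecLin v, ⟨v, rfl⟩, B.mulVecLin v, ⟨v, rfl⟩, by
      simp [Matrix.add_mulVec, Matrix.mulVecLin]⟩
  calc (A + B).rank = Module.finrank ℝ (LinearMap.range (A + B).mulVecLin) := rfl
    _ ≤ Module.finrank ℝ ↑(LinearMap.range A.mulVecLin ⊔ LinearMap.range B.mulVecLin) :=
        Submodule.finrank_mono h
    _ ≤ _ := Submodule.finrank_add_le_finrank_add_finrank _ _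

/-- Ŝ⁻¹𝕊 has at least n − 2r unit eigenvalues: the kernel of
Ŝ⁻¹𝕊 − I has dimension at least n − 2r, r = number of diagonal ones of Π_I. -/
theorem stmt_4 (n : ℕ) (hn : 1 ≤ n)
    (L Mb M Pi : Matrix (Fin n) (Fin n) ℝ)
    (hM : M.IsDiag) (hMpos : ∀ i, 0 < M i i)
    (hPi : Pi.IsDiag) (hPi01 : ∀ i, Pi i i = 0 ∨ Pi i i = 1)
    (α : ℝ) (hα : 0 < α)
    (hinv : IsUnit (Real.sqrt α • L + Mb * Pi).det) :
    let S : Matrix (Fin n) (Fin n) ℝ :=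
      α • (L * M⁻¹ * Lᵀ) + Mb * Pi * M⁻¹ * Mbᵀ
    let Sh : Matrix (Fin n) (Fin n) ℝ :=
      (Real.sqrt α • L + Mb * Pi) * M⁻¹ * (Real.sqrt α • L + Mb * Pi)ᵀ
    n - 2 * (Finset.univ.filter (fun i => Pi i i = 1)).card ≤
      Module.finrank ℝ (LinearMap.ker (Sh⁻¹ * S - 1).mulVecLin) := by
  intro S Sh
  classical
  set sa := Real.sqrt α with hsa
  -- diagonal representations
  have hMd : M = diagonal M.diag := hM.diagonal_diag.symm
  have hPid : Pi = diagonal Pi.diag := hPi.diagonal_diag.symm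
  have hMinv : M⁻¹ = diagonal (fun i => (M.diag i)⁻¹) := by
    apply Matrix.inv_eq_right_inv
    rw [hMd, Matrix.diagonal_mul_diagonal]
    ext i j
    rcases eq_or_ne i j with rfl | hij
    · simp [Matrix.diag, mul_inv_cancel₀ (ne_of_gt (hMpos i))]
    · simp [Matrix.diagonal_apply_ne _ hij, Matrix.one_apply_ne hij]
  -- Pi * M⁻¹ * Pi = Pi * M⁻¹
  have hkey : Pi * M⁻¹ * Pi = Pi * M⁻¹ := by
    rw [hMinv, hPid, Matrix.diagonal_mul_diagonal, Matrix.diagonal_mul_diagonal]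
    ext i j
    rcases eq_or_ne i j with rfl | hij
    · rcases hPi01 i with h | h <;> simp [Matrix.diag, h]
    · simp [Matrix.diagonal_apply_ne _ hij]
  have hPiT : Piᵀ = Pi := by rw [hPid]; simp
  have hMiT : (M⁻¹)ᵀ = M⁻¹ := by rw [hMinv]; simp
  -- expansion of Sh
  have hsa2 : sa * sa = α := Real.mul_self_sqrt hα.le
  have hdiff : S - Sh = (-sa) • (L * M⁻¹ * Pi * Mbᵀ) + (-sa) • (Mb * Pi * M⁻¹ * Lᵀ) := by
    show α • (L * M⁻¹ * Lᵀ) + Mb * Pi * M⁻¹ * Mbᵀ -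
        (sa • L + Mb * Pi) * M⁻¹ * (sa • L + Mb * Pi)ᵀ = _
    rw [Matrix.transpose_add, Matrix.transpose_smul, Matrix.transpose_mul, hPiT]
    have expand : (sa • L + Mb * Pi) * M⁻¹ * (sa • Lᵀ + Pi * Mbᵀ) =
        (sa * sa) • (L * M⁻¹ * Lᵀ) + sa • (L * M⁻¹ * Pi * Mbᵀ)
          + sa • (Mb * Pi * M⁻¹ * Lᵀ) + Mb * (Pi * M⁻¹ * Pi) * Mbᵀ := by
      simp only [Matrix.add_mul, Matrix.mul_add, Matrix.smul_mul, Matrix.mul_smul,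
        smul_smul, smul_add, mul_assoc]
      abel
    rw [expand, hkey, hsa2]
    simp only [mul_assoc, hsa]
    module
  -- invertibility of Sh
  have hMdet : IsUnit M.det := by
    rw [hMd, Matrix.det_diagonal]
    exact isUnit_iff_ne_zero.2 (ne_of_gt (Finset.prod_pos fun i _ => hMpos i))
  have hMidet : IsUnit (M⁻¹).det := by
    rw [Matrix.det_nonsing_inv]
    exact (isUnit_ringInverse).2 hMdet
  have hShdet : IsUnit Sh.det := by
    show IsUnit ((sa • L + Mb * Pi) * M⁻¹ * (sa • L + Mb * Pi)ᵀ).det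
    rw [Matrix.det_mul, Matrix.det_mul, Matrix.det_transpose]
    exact (hinv.mul hMidet).mul hinv
  have hSh1 : Sh⁻¹ * Sh = 1 := Matrix.nonsing_inv_mul Sh hShdet
  -- E decomposition
  have hE : Sh⁻¹ * S - 1 =
      ((-sa) • (Sh⁻¹ * (L * M⁻¹))) * Pi * Mbᵀ + ((-sa) • (Sh⁻¹ * Mb)) * Pi * (M⁻¹ * Lᵀ) := by
    have : Sh⁻¹ * S - 1 = Sh⁻¹ * (S - Sh) := by
      rw [Matrix.mul_sub, hSh1]
    rw [this, hdiff, Matrix.mul_add]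
    simp only [Matrix.mul_smul, Matrix.smul_mul, mul_assoc]
  -- rank bound
  set r := (Finset.univ.filter (fun i => Pi i i = 1)).card with hr
  have hset : Finset.univ.filter (fun i => Pi.diag i ≠ 0)
      = Finset.univ.filter (fun i => Pi i i = 1) :=
    Finset.filter_congr (fun i _ => by rcases hPi01 i with h | h <;> simp [Matrix.diag, h])
  have hrankPi : Pi.rank = r := by
    rw [hPid, Matrix.rank_diagonal, Fintype.card_subtype, hset, hr]
  have hrankE : (Sh⁻¹ * S - 1).rank ≤ 2 * r := by
    rw [hE]
    calc _ ≤ (((-sa) • (Sh⁻¹ * (L * M⁻¹))) * Pi * Mbᵀ).rank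
            + (((-sa) • (Sh⁻¹ * Mb)) * Pi * (M⁻¹ * Lᵀ)).rank := rank_add_le' _ _
      _ ≤ Pi.rank + Pi.rank := by
          gcongr <;>
            exact le_trans (Matrix.rank_mul_le_left _ _) (Matrix.rank_mul_le_right _ _)
      _ = 2 * r := by rw [hrankPi]; ring
  -- rank-nullity
  have hrn := LinearMap.finrank_range_add_finrank_ker (Sh⁻¹ * S - 1).mulVecLin
  rw [Module.finrank_fin_fun] at hrn
  have : (Sh⁻¹ * S - 1).rank
      = Module.finrank ℝ (LinearMap.range (Sh⁻¹ * S - 1).mulVecLin) := rfl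
  omega
end

section
/- With L, M̄, M, Π_I, α, 𝕊, Ŝ as in the context, the identity 2𝕊 − Ŝ = (√α L − M̄ Π_I) M⁻¹ (√α L − M̄ Π_I)ᵀ holds; in particular 2𝕊 − Ŝ is positive semidefinite, i.e. xᵀ 𝕊 x ≥ (1/2) xᵀ Ŝ x for every x ∈ ℝⁿ. -/
open Matrix

/-- 2𝕊 − Ŝ = (√α L − M̄ Π_I) M⁻¹ (√α L − M̄ Π_I)ᵀ, hence
2𝕊 − Ŝ is positive semidefinite, i.e. xᵀ𝕊x ≥ (1/2) xᵀŜx for all x. -/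
theorem stmt_5 (n : ℕ) (hn : 1 ≤ n)
    (L Mb M Pi : Matrix (Fin n) (Fin n) ℝ)
    (hM : M.IsDiag) (hMpos : ∀ i, 0 < M i i)
    (hPi : Pi.IsDiag) (hPi01 : ∀ i, Pi i i = 0 ∨ Pi i i = 1)
    (α : ℝ) (hα : 0 < α) :
    let S : Matrix (Fin n) (Fin n) ℝ :=
      α • (L * M⁻¹ * Lᵀ) + Mb * Pi * M⁻¹ * Mbᵀ
    let Sh : Matrix (Fin n) (Fin n) ℝ :=
      (Real.sqrt α • L + Mb * Pi) * M⁻¹ * (Real.sqrt α • L + Mb * Pi)ᵀ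
    (2 : ℝ) • S - Sh =
        (Real.sqrt α • L - Mb * Pi) * M⁻¹ * (Real.sqrt α • L - Mb * Pi)ᵀ ∧
      ∀ x : Fin n → ℝ,
        (1 / 2) * (x ⬝ᵥ Sh.mulVec x) ≤ x ⬝ᵥ S.mulVec x := by
  intro S Sh
  have hMdiag : M = Matrix.diagonal M.diag := hM.diagonal_diag.symm
  have hPidiag : Pi = Matrix.diagonal Pi.diag := hPi.diagonal_diag.symm
  have hMinv : M⁻¹ = Matrix.diagonal (fun i => (M i i)⁻¹) := by
    apply Matrix.inv_eq_right_inv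
    conv_lhs => rw [hMdiag]
    rw [Matrix.diagonal_mul_diagonal]
    ext i j
    by_cases h : i = j
    · subst h
      simp [Matrix.diagonal, Matrix.diag, mul_inv_cancel₀ (hMpos i).ne']
    · simp [Matrix.diagonal, h]
  have hPiT : Piᵀ = Pi := by conv_lhs => rw [hPidiag, Matrix.diagonal_transpose, ← hPidiag]
  have hPiMPi : Pi * M⁻¹ * Pi = Pi * M⁻¹ := by
    rw [hMinv]
    conv_lhs => rw [hPidiag]
    conv_rhs => rw [hPidiag]
    rw [Matrix.diagonal_mul_diagonal, Matrix.diagonal_mul_diagonal]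
    ext i j
    by_cases hij : i = j
    · subst hij
      rcases hPi01 i with h | h <;> simp [Matrix.diagonal, Matrix.diag, h]
    · simp [Matrix.diagonal, hij]
  set A := Real.sqrt α • L with hAdef
  set B := Mb * Pi with hBdef
  have hA : A * M⁻¹ * Aᵀ = α • (L * M⁻¹ * Lᵀ) := by
    rw [hAdef]
    rw [Matrix.transpose_smul, Matrix.smul_mul, Matrix.smul_mul, Matrix.mul_smul, smul_smul,
      Real.mul_self_sqrt hα.le]
  have hB : B * M⁻¹ * Bᵀ = Mb * Pi * M⁻¹ * Mbᵀ := by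
    rw [hBdef, Matrix.transpose_mul, hPiT]
    calc Mb * Pi * M⁻¹ * (Pi * Mbᵀ) = Mb * (Pi * M⁻¹ * Pi) * Mbᵀ := by
          simp only [Matrix.mul_assoc]
      _ = Mb * Pi * M⁻¹ * Mbᵀ := by rw [hPiMPi]; simp only [Matrix.mul_assoc]
  have expand : (A + B) * M⁻¹ * (A + B)ᵀ + (A - B) * M⁻¹ * (A - B)ᵀ =
      (A * M⁻¹ * Aᵀ + A * M⁻¹ * Aᵀ) + (B * M⁻¹ * Bᵀ + B * M⁻¹ * Bᵀ) := by
    simp only [Matrix.transpose_add, Matrix.transpose_sub]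
    noncomm_ring
  have key : (2 : ℝ) • S - Sh = (A - B) * M⁻¹ * (A - B)ᵀ := by
    have h2S : (2 : ℝ) • S = (A + B) * M⁻¹ * (A + B)ᵀ + (A - B) * M⁻¹ * (A - B)ᵀ := by
      rw [expand, hA, hB]
      show (2 : ℝ) • (α • (L * M⁻¹ * Lᵀ) + Mb * Pi * M⁻¹ * Mbᵀ) = _
      rw [smul_add, two_smul, two_smul]
    have hSh : Sh = (A + B) * M⁻¹ * (A + B)ᵀ := rfl
    rw [h2S, hSh]
    abel
  have hpsd : ∀ x : Fin n → ℝ, 0 ≤ x ⬝ᵥ ((A - B) * M⁻¹ * (A - B)ᵀ).mulVec x := by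
    intro x
    set y := (A - B)ᵀ.mulVec x with hy
    have h1 : ((A - B) * M⁻¹ * (A - B)ᵀ).mulVec x = (A - B).mulVec (M⁻¹.mulVec y) := by
      rw [hy, Matrix.mulVec_mulVec, Matrix.mulVec_mulVec]
    rw [h1, Matrix.dotProduct_mulVec, ← Matrix.mulVec_transpose]
    have h2 : (A - B)ᵀ.mulVec x = y := rfl
    rw [h2, hMinv]
    rw [dotProduct]
    apply Finset.sum_nonneg
    intro i _
    rw [Matrix.mulVec_diagonal]
    have := (hMpos i).le
    have : 0 ≤ (M i i)⁻¹ := inv_nonneg.mpr this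
    nlinarith [sq_nonneg (y i), mul_self_nonneg (y i)]
  refine ⟨key, fun x => ?_⟩
  have h := hpsd x
  rw [← key] at h
  have hexp : x ⬝ᵥ ((2 : ℝ) • S - Sh).mulVec x
      = 2 * (x ⬝ᵥ S.mulVec x) - x ⬝ᵥ Sh.mulVec x := by
    rw [Matrix.sub_mulVec, dotProduct_sub, Matrix.smul_mulVec,
      dotProduct_smul, smul_eq_mul]
  rw [hexp] at h
  linarith
end

section
/- With L, M̄, M, Π_I, α, 𝕊, Ŝ, ζ, ξ as in the context, assume that √α L + M̄ Π_I is invertible. Then for every nonzero x ∈ ℝⁿ, (1/2)· xᵀ Ŝ x ≤ xᵀ 𝕊 x ≤ (ζ² + (1+ζ)²)· xᵀ Ŝ x; equivalently, every eigenvalue λ of Ŝ⁻¹ 𝕊 satisfies 1/2 ≤ λ ≤ ζ² + (1+ζ)². -/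
open Matrix

/-- The operator norm of a real matrix induced by the Euclidean vector norm. -/
noncomputable def l2OpNorm {m n : Type*} [Fintype m] [Fintype n] [DecidableEq n]
    (A : Matrix m n ℝ) : ℝ :=
  ‖LinearMap.toContinuousLinearMap (Matrix.toEuclideanLin A)‖

open scoped Matrix.Norms.L2Operator

namespace Stmt6Aux

variable {m : ℕ}

lemma l2OpNorm_transpose (A : Matrix (Fin m) (Fin m) ℝ) : l2OpNorm Aᵀ = l2OpNorm A := by
  have h := Matrix.l2_opNorm_conjTranspose A
  rwa [Matrix.conjTranspose_eq_transpose_of_trivial] at h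

lemma l2OpNorm_nonneg (A : Matrix (Fin m) (Fin m) ℝ) : 0 ≤ l2OpNorm A := norm_nonneg _

noncomputable def en (v : Fin m → ℝ) : ℝ := ‖(EuclideanSpace.equiv (Fin m) ℝ).symm v‖

lemma en_nonneg (v : Fin m → ℝ) : 0 ≤ en v := norm_nonneg _

lemma dot_self_eq (v : Fin m → ℝ) : v ⬝ᵥ v = en v ^ 2 := by
  rw [en, ← real_inner_self_eq_norm_sq]
  simp [PiLp.inner_apply, dotProduct, RCLike.inner_apply]
  rw [EuclideanSpace.norm_eq, Real.sq_sqrt (Finset.sum_nonneg fun i _ => by positivity)]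
  simp [sq, Real.norm_eq_abs]

lemma en_mulVec_le (A : Matrix (Fin m) (Fin m) ℝ) (v : Fin m → ℝ) :
    en (A *ᵥ v) ≤ l2OpNorm A * en v :=
  Matrix.l2_opNorm_mulVec A ((EuclideanSpace.equiv (Fin m) ℝ).symm v)

lemma en_sub_le (u w : Fin m → ℝ) : en (u - w) ≤ en u + en w := by
  simpa [en, map_sub] using
    norm_sub_le ((EuclideanSpace.equiv (Fin m) ℝ).symm u) ((EuclideanSpace.equiv (Fin m) ℝ).symm w)

lemma en_pos (v : Fin m → ℝ) (hv : v ≠ 0) : 0 < en v := by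
  rw [en, norm_pos_iff]; simpa using hv

lemma quadG (G : Matrix (Fin m) (Fin m) ℝ) (x : Fin m → ℝ) :
    x ⬝ᵥ (Gᵀ * G) *ᵥ x = (G *ᵥ x) ⬝ᵥ (G *ᵥ x) := by
  rw [← mulVec_mulVec, dotProduct_mulVec, vecMul_transpose]

lemma half_dot (u a : Fin m → ℝ) : (1/2) * (u ⬝ᵥ u) ≤ a ⬝ᵥ a + (u - a) ⬝ᵥ (u - a) := by
  have h0 : 0 ≤ (u - (2:ℝ) • a) ⬝ᵥ (u - (2:ℝ) • a) :=
    Finset.sum_nonneg fun i _ => mul_self_nonneg _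
  have hc : a ⬝ᵥ u = u ⬝ᵥ a := dotProduct_comm a u
  simp only [sub_dotProduct, dotProduct_sub, smul_dotProduct, dotProduct_smul,
    smul_eq_mul] at h0 ⊢
  linarith

lemma diag_inv (v : Fin m → ℝ) (hv : ∀ i, v i ≠ 0) :
    (diagonal v)⁻¹ = diagonal (fun i => (v i)⁻¹) := by
  apply Matrix.inv_eq_right_inv
  rw [diagonal_mul_diagonal, ← diagonal_one, diagonal_eq_diagonal_iff]
  exact fun i => mul_inv_cancel₀ (hv i)

end Stmt6Aux

open Stmt6Aux

/-- (1/2) xᵀŜx ≤ xᵀ𝕊x ≤ (ζ² + (1+ζ)²) xᵀŜx for all nonzero x;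
equivalently every eigenvalue λ of Ŝ⁻¹𝕊 satisfies 1/2 ≤ λ ≤ ζ² + (1+ζ)². -/
theorem stmt_6 (n : ℕ) (hn : 1 ≤ n)
    (L Mb M Pi : Matrix (Fin n) (Fin n) ℝ)
    (hM : M.IsDiag) (hMpos : ∀ i, 0 < M i i)
    (hPi : Pi.IsDiag) (hPi01 : ∀ i, Pi i i = 0 ∨ Pi i i = 1)
    (α : ℝ) (hα : 0 < α)
    (hinv : IsUnit (Real.sqrt α • L + Mb * Pi).det) :
    let S : Matrix (Fin n) (Fin n) ℝ :=
      α • (L * M⁻¹ * Lᵀ) + Mb * Pi * M⁻¹ * Mbᵀ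
    let Sh : Matrix (Fin n) (Fin n) ℝ :=
      (Real.sqrt α • L + Mb * Pi) * M⁻¹ * (Real.sqrt α • L + Mb * Pi)ᵀ
    let ζ : ℝ := l2OpNorm (Matrix.diagonal (fun i => Real.sqrt (M i i)) *
      (Real.sqrt α • L + Mb * Pi)⁻¹ * (Real.sqrt α • L) *
      Matrix.diagonal (fun i => (Real.sqrt (M i i))⁻¹))
    (∀ x : Fin n → ℝ, x ≠ 0 →
        (1 / 2) * (x ⬝ᵥ Sh.mulVec x) ≤ x ⬝ᵥ S.mulVec x ∧
          x ⬝ᵥ S.mulVec x ≤ (ζ ^ 2 + (1 + ζ) ^ 2) * (x ⬝ᵥ Sh.mulVec x)) ∧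
      ∀ (lam : ℝ) (x : Fin n → ℝ), x ≠ 0 → (Sh⁻¹ * S).mulVec x = lam • x →
        1 / 2 ≤ lam ∧ lam ≤ ζ ^ 2 + (1 + ζ) ^ 2 := by
  intro S Sh ζ
  set A : Matrix (Fin n) (Fin n) ℝ := Real.sqrt α • L with hA
  set B : Matrix (Fin n) (Fin n) ℝ := Mb * Pi with hB
  set E : Matrix (Fin n) (Fin n) ℝ := A + B with hE
  set D : Matrix (Fin n) (Fin n) ℝ := diagonal (fun i => Real.sqrt (M i i)) with hD
  set Dv : Matrix (Fin n) (Fin n) ℝ := diagonal (fun i => (Real.sqrt (M i i))⁻¹) with hDv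
  set Z : Matrix (Fin n) (Fin n) ℝ := D * E⁻¹ * A * Dv with hZ
  have hζ : ζ = l2OpNorm Z := rfl
  have hζ0 : 0 ≤ ζ := hζ ▸ l2OpNorm_nonneg Z
  have hspos : ∀ i, (0:ℝ) < Real.sqrt (M i i) := fun i => Real.sqrt_pos.mpr (hMpos i)
  have hMinv : M⁻¹ = diagonal (fun i => (M i i)⁻¹) := by
    conv_lhs => rw [← hM.diagonal_diag]
    exact diag_inv _ (fun i => (hMpos i).ne')
  have hDvDv : Dv * Dv = M⁻¹ := by
    rw [hDv, hMinv, diagonal_mul_diagonal, diagonal_eq_diagonal_iff]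
    intro i
    rw [← mul_inv, Real.mul_self_sqrt (hMpos i).le]
  have hDvDv' : ∀ X : Matrix (Fin n) (Fin n) ℝ, Dv * (Dv * X) = M⁻¹ * X := fun X => by
    rw [← Matrix.mul_assoc, hDvDv]
  have hDDv : D * Dv = 1 := by
    rw [hD, hDv, diagonal_mul_diagonal, ← diagonal_one, diagonal_eq_diagonal_iff]
    exact fun i => mul_inv_cancel₀ (hspos i).ne'
  have hDDv' : ∀ X : Matrix (Fin n) (Fin n) ℝ, D * (Dv * X) = X := fun X => by
    rw [← Matrix.mul_assoc, hDDv, Matrix.one_mul]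
  have hDvT : Dvᵀ = Dv := diagonal_transpose _
  have hDT : Dᵀ = D := diagonal_transpose _
  set U : Matrix (Fin n) (Fin n) ℝ := Dv * Eᵀ with hU
  set Va : Matrix (Fin n) (Fin n) ℝ := Dv * Aᵀ with hVa
  set Vb : Matrix (Fin n) (Fin n) ℝ := Dv * Bᵀ with hVb
  have hEdet : IsUnit E.det := hinv
  have hEtdet : IsUnit Eᵀ.det := by rwa [det_transpose]
  -- Sh = Uᵀ * U
  have hSh : Sh = Uᵀ * U := by
    show E * M⁻¹ * Eᵀ = Uᵀ * U
    rw [hU, transpose_mul, hDvT, transpose_transpose, ← hDvDv]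
    rw [Matrix.mul_assoc, Matrix.mul_assoc, Matrix.mul_assoc]
  -- S = Vaᵀ * Va + Vbᵀ * Vb
  have hSa : α • (L * M⁻¹ * Lᵀ) = Vaᵀ * Va := by
    rw [hVa, transpose_mul, hDvT, transpose_transpose, hA, transpose_smul]
    simp only [Matrix.smul_mul, Matrix.mul_smul, smul_smul, Real.mul_self_sqrt hα.le,
      Matrix.mul_assoc, hDvDv']
  have hSb : Mb * Pi * M⁻¹ * Mbᵀ = Vbᵀ * Vb := by
    have hPiM : Pi * M⁻¹ * Piᵀ = Pi * M⁻¹ := by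
      conv_lhs => rw [← hPi.diagonal_diag]
      conv_rhs => rw [← hPi.diagonal_diag]
      rw [hMinv, diagonal_transpose, diagonal_mul_diagonal, diagonal_mul_diagonal,
        diagonal_eq_diagonal_iff]
      intro i
      rcases hPi01 i with h | h <;> simp [Matrix.diag, h]
    have h2 := congrArg (fun X => X * Mbᵀ) hPiM
    simp only [Matrix.mul_assoc] at h2
    rw [hVb, transpose_mul, hDvT, transpose_transpose, hB, transpose_mul]
    simp only [Matrix.mul_assoc, hDvDv']
    rw [← h2]
  have hS : S = Vaᵀ * Va + Vbᵀ * Vb := by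
    show α • (L * M⁻¹ * Lᵀ) + Mb * Pi * M⁻¹ * Mbᵀ = _
    rw [hSa, hSb]
  -- key identity Zᵀ * U = Va
  have hZU : Zᵀ * U = Va := by
    rw [hZ, hU, hVa]
    simp only [transpose_mul, hDvT, hDT, transpose_nonsing_inv, Matrix.mul_assoc]
    rw [hDDv' Eᵀ, nonsing_inv_mul _ hEtdet, Matrix.mul_one]
  -- quadratic form bounds, for every x
  have key : ∀ x : Fin n → ℝ,
      (1/2) * (x ⬝ᵥ Sh *ᵥ x) ≤ x ⬝ᵥ S *ᵥ x ∧
        x ⬝ᵥ S *ᵥ x ≤ (ζ^2 + (1+ζ)^2) * (x ⬝ᵥ Sh *ᵥ x) := by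
    intro x
    have hqSh : x ⬝ᵥ Sh *ᵥ x = (U *ᵥ x) ⬝ᵥ (U *ᵥ x) := by rw [hSh, quadG]
    have hsub : Vb *ᵥ x = U *ᵥ x - Va *ᵥ x := by
      have hVbE : Vb = U - Va := by
        rw [hVb, hU, hVa, hE, transpose_add, Matrix.mul_add, add_sub_cancel_left]
      rw [hVbE, sub_mulVec]
    have hqS : x ⬝ᵥ S *ᵥ x = (Va *ᵥ x) ⬝ᵥ (Va *ᵥ x) +
        (U *ᵥ x - Va *ᵥ x) ⬝ᵥ (U *ᵥ x - Va *ᵥ x) := by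
      rw [hS, add_mulVec, dotProduct_add, quadG, quadG, hsub]
    have haZ : Va *ᵥ x = Zᵀ *ᵥ (U *ᵥ x) := by rw [mulVec_mulVec, hZU]
    have h1 : en (Va *ᵥ x) ≤ ζ * en (U *ᵥ x) := by
      rw [haZ, hζ, ← l2OpNorm_transpose Z]
      exact en_mulVec_le _ _
    have h2 : en (U *ᵥ x - Va *ᵥ x) ≤ (1 + ζ) * en (U *ᵥ x) := by
      calc en (U *ᵥ x - Va *ᵥ x) ≤ en (U *ᵥ x) + en (Va *ᵥ x) := en_sub_le _ _
        _ ≤ en (U *ᵥ x) + ζ * en (U *ᵥ x) := by linarith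
        _ = (1 + ζ) * en (U *ᵥ x) := by ring
    constructor
    · rw [hqSh, hqS]; exact half_dot _ _
    · rw [hqSh, hqS, dot_self_eq, dot_self_eq, dot_self_eq]
      have e1 : en (Va *ᵥ x) ^ 2 ≤ (ζ * en (U *ᵥ x)) ^ 2 :=
        pow_le_pow_left₀ (en_nonneg _) h1 2
      have e2 : en (U *ᵥ x - Va *ᵥ x) ^ 2 ≤ ((1 + ζ) * en (U *ᵥ x)) ^ 2 :=
        pow_le_pow_left₀ (en_nonneg _) h2 2
      rw [mul_pow] at e1 e2
      linarith
  -- positivity and invertibility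
  have hUdet : IsUnit U.det := by
    rw [hU, Matrix.det_mul]
    refine IsUnit.mul ?_ hEtdet
    rw [hDv, det_diagonal]
    exact isUnit_iff_ne_zero.mpr (Finset.prod_ne_zero_iff.mpr
      (fun i _ => inv_ne_zero (hspos i).ne'))
  have hSh_pos : ∀ x : Fin n → ℝ, x ≠ 0 → 0 < x ⬝ᵥ Sh *ᵥ x := by
    intro x hx
    have hume : U *ᵥ x ≠ 0 := by
      intro h0
      apply hx
      have hinvU : U⁻¹ *ᵥ (U *ᵥ x) = x := by
        rw [mulVec_mulVec, nonsing_inv_mul _ hUdet, one_mulVec]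
      rw [h0, mulVec_zero] at hinvU
      exact hinvU.symm
    have : x ⬝ᵥ Sh *ᵥ x = (U *ᵥ x) ⬝ᵥ (U *ᵥ x) := by rw [hSh, quadG]
    rw [this, dot_self_eq]
    exact pow_pos (en_pos _ hume) 2
  have hMidet : IsUnit M⁻¹.det := by
    rw [hMinv, det_diagonal]
    exact isUnit_iff_ne_zero.mpr (Finset.prod_ne_zero_iff.mpr
      (fun i _ => inv_ne_zero (hMpos i).ne'))
  have hShdet : IsUnit Sh.det := by
    have hh : Sh.det = E.det * M⁻¹.det * Eᵀ.det := by
      show (E * M⁻¹ * Eᵀ).det = _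
      rw [Matrix.det_mul, Matrix.det_mul]
    rw [hh]
    exact (hEdet.mul hMidet).mul hEtdet
  refine ⟨fun x _ => key x, fun lam x hx heig => ?_⟩
  have hS_eq : S *ᵥ x = lam • (Sh *ᵥ x) := by
    have h := congrArg (fun v => Sh *ᵥ v) heig
    simp only [mulVec_mulVec, mulVec_smul] at h
    rwa [← Matrix.mul_assoc, mul_nonsing_inv _ hShdet, Matrix.one_mul] at h
  have hdot : x ⬝ᵥ S *ᵥ x = lam * (x ⬝ᵥ Sh *ᵥ x) := by
    rw [hS_eq, dotProduct_smul, smul_eq_mul]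
  have hq := hSh_pos x hx
  obtain ⟨k1, k2⟩ := key x
  rw [hdot] at k1 k2
  exact ⟨(mul_le_mul_iff_of_pos_right hq).mp k1, (mul_le_mul_iff_of_pos_right hq).mp k2⟩
end

section
/- With the setup of the context (in particular √α L + M̄ Π_I invertible), let J^aug be the symmetric block matrix [[J₁₁, J₁₂ᵀ],[J₁₂, 0]] with J₁₁ = blkdiag(M, αM) and J₁₂ = [[L, −M̄],[0, P_A M]], and let 𝒫 = blkdiag(J₁₁, Ŝ_A) be the block-diagonal preconditioner, where Ŝ_A = (1/α)·Q·blkdiag(Ŝ, P_A M P_Aᵀ)·Qᵀ with Q = [[Iₙ, −M̄ Π_A M⁻¹ P_Aᵀ],[0, I_{|A|}]]. Then every real number λ for which there exists a nonzero vector z with J^aug z = λ·(𝒫 z) lies in I⁻ ∪ I⁺, where I⁻ = [ (1 − √(1 + 4ξ))/2 , (1 − √3)/2 ] and I⁺ = [ 1 , (1 + √(1 + 4ξ))/2 ]. -/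
open Matrix

section Aux

lemma aux_sum_dite_val {n : ℕ} (A : Finset (Fin n)) (f : {i // i ∈ A} → ℝ) :
    ∑ i : Fin n, (if h : i ∈ A then f ⟨i, h⟩ else 0) = ∑ j : {i // i ∈ A}, f j := by
  classical
  have h2 : ∑ j : {i // i ∈ A}, f j
      = ∑ j : {i // i ∈ A}, (fun i => if h : i ∈ A then f ⟨i, h⟩ else 0) (j : Fin n) := by
    refine Finset.sum_congr rfl fun j _ => ?_
    simp [j.2]
  rw [h2, Finset.sum_coe_sort A (fun i => if h : i ∈ A then f ⟨i, h⟩ else 0)]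
  exact (Finset.sum_subset (Finset.subset_univ A) (fun i _ hi => dif_neg hi)).symm

lemma aux_PA_mulVec {n : ℕ} (A : Finset (Fin n)) (v : Fin n → ℝ) :
    ((1 : Matrix (Fin n) (Fin n) ℝ).submatrix (Subtype.val : {i // i ∈ A} → Fin n) id) *ᵥ v
      = fun j => v j.val := by
  funext j
  simp [Matrix.mulVec, Matrix.submatrix, Matrix.one_apply, dotProduct]

lemma aux_PAT_mulVec {n : ℕ} (A : Finset (Fin n)) (y2 : {i // i ∈ A} → ℝ) :
    ((1 : Matrix (Fin n) (Fin n) ℝ).submatrix (Subtype.val : {i // i ∈ A} → Fin n) id)ᵀ *ᵥ y2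
      = fun i => if h : i ∈ A then y2 ⟨i, h⟩ else 0 := by
  funext i
  simp only [Matrix.mulVec, Matrix.transpose_apply, Matrix.submatrix_apply, id_eq,
    dotProduct, Matrix.one_apply]
  by_cases h : i ∈ A
  · rw [Finset.sum_eq_single (⟨i, h⟩ : {i // i ∈ A})]
    · simp [h]
    · intro j _ hj
      have : (j : Fin n) ≠ i := fun hc => hj (Subtype.ext hc)
      simp [this]
    · simp
  · rw [Finset.sum_eq_zero, dif_neg h]
    intro j _
    have : (j : Fin n) ≠ i := fun hc => h (hc ▸ j.2)
    simp [this]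

noncomputable def en {n : ℕ} (v : Fin n → ℝ) : EuclideanSpace ℝ (Fin n) :=
  (WithLp.equiv 2 (Fin n → ℝ)).symm v

lemma en_normsq {n : ℕ} (v : Fin n → ℝ) : ‖en v‖ ^ 2 = ∑ i, v i ^ 2 := by
  rw [EuclideanSpace.norm_eq, Real.sq_sqrt (by positivity)]
  simp [en]

lemma en_inner {n : ℕ} (v w : Fin n → ℝ) : (inner ℝ (en v) (en w) : ℝ) = v ⬝ᵥ w := by
  simp [en, PiLp.inner_apply, dotProduct, RCLike.inner_apply, mul_comm]

lemma l2OpNorm_nonneg {n : ℕ} (B : Matrix (Fin n) (Fin n) ℝ) : 0 ≤ l2OpNorm B :=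
  norm_nonneg _

lemma en_mulVec_le {n : ℕ} (B : Matrix (Fin n) (Fin n) ℝ) (u : Fin n → ℝ) :
    ‖en (B *ᵥ u)‖ ≤ l2OpNorm B * ‖en u‖ := by
  have h : en (B *ᵥ u) = (LinearMap.toContinuousLinearMap (Matrix.toEuclideanLin B)) (en u) := by
    simp [en, Matrix.toEuclideanLin_apply]
  rw [h]
  exact (LinearMap.toContinuousLinearMap (Matrix.toEuclideanLin B)).le_opNorm _

lemma en_transpose_mulVec_le {n : ℕ} (B : Matrix (Fin n) (Fin n) ℝ) (u : Fin n → ℝ) :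
    ‖en (Bᵀ *ᵥ u)‖ ≤ l2OpNorm B * ‖en u‖ := by
  set t := Bᵀ *ᵥ u with ht
  rcases eq_or_lt_of_le (norm_nonneg (en t)) with h0 | h0
  · rw [← h0]
    exact mul_nonneg (l2OpNorm_nonneg B) (norm_nonneg _)
  have key : ‖en t‖ ^ 2 ≤ (l2OpNorm B * ‖en u‖) * ‖en t‖ := by
    have h1 : ‖en t‖ ^ 2 = (inner ℝ (en t) (en t) : ℝ) := (real_inner_self_eq_norm_sq _).symm
    have h2 : t ⬝ᵥ t = u ⬝ᵥ (B *ᵥ t) := by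
      rw [ht, Matrix.mulVec_transpose, ← Matrix.dotProduct_mulVec]
    have h3 : (inner ℝ (en u) (en (B *ᵥ t)) : ℝ) ≤ ‖en u‖ * ‖en (B *ᵥ t)‖ :=
      real_inner_le_norm _ _
    have h4 : ‖en u‖ * ‖en (B *ᵥ t)‖ ≤ ‖en u‖ * (l2OpNorm B * ‖en t‖) :=
      mul_le_mul_of_nonneg_left (en_mulVec_le B t) (norm_nonneg _)
    rw [h1, en_inner, h2, ← en_inner]
    nlinarith [h3, h4]
  nlinarith [key, h0]

/-- Core Euclidean inequality. -/
lemma core_upper {n : ℕ} (Z : Matrix (Fin n) (Fin n) ℝ) (a : Fin n → ℝ) :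
    (∑ i, (Zᵀ *ᵥ a) i ^ 2) + ∑ i, (a i - (Zᵀ *ᵥ a) i) ^ 2
      ≤ (l2OpNorm Z ^ 2 + (1 + l2OpNorm Z) ^ 2) * ∑ i, a i ^ 2 := by
  set ζ := l2OpNorm Z with hζ
  have hζ0 : 0 ≤ ζ := l2OpNorm_nonneg Z
  set c := Zᵀ *ᵥ a with hc
  have h1 : ‖en c‖ ≤ ζ * ‖en a‖ := en_transpose_mulVec_le Z a
  have h2 : ∑ i, c i ^ 2 = ‖en c‖ ^ 2 := (en_normsq c).symm
  have h3 : ∑ i, a i ^ 2 = ‖en a‖ ^ 2 := (en_normsq a).symm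
  have h4 : ∑ i, (a i - c i) ^ 2 = ‖en a - en c‖ ^ 2 := by
    have : en a - en c = en (fun i => a i - c i) := rfl
    rw [this, en_normsq]
  have h5 : ‖en a - en c‖ ≤ ‖en a‖ + ‖en c‖ := norm_sub_le _ _
  rw [h2, h3, h4]
  nlinarith [norm_nonneg (en a), norm_nonneg (en c), norm_nonneg (en a - en c), h1, h5]

lemma interval_lemma (ξ lam : ℝ) (h1 : 1 / 2 ≤ lam ^ 2 - lam) (h2 : lam ^ 2 - lam ≤ ξ) :
    ((1 - Real.sqrt (1 + 4 * ξ)) / 2 ≤ lam ∧ lam ≤ (1 - Real.sqrt 3) / 2) ∨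
      (1 ≤ lam ∧ lam ≤ (1 + Real.sqrt (1 + 4 * ξ)) / 2) := by
  have hcase : lam < 0 ∨ 1 < lam := by
    by_contra h
    push_neg at h
    nlinarith [h.1, h.2, mul_nonneg h.1 (by linarith [h.2] : (0:ℝ) ≤ 1 - lam)]
  rcases hcase with h | h
  · left
    constructor
    · have hb : (1 - 2 * lam) ^ 2 ≤ 1 + 4 * ξ := by nlinarith
      have := Real.sqrt_le_sqrt hb
      rw [Real.sqrt_sq (by linarith)] at this
      linarith
    · have hb : (3 : ℝ) ≤ (1 - 2 * lam) ^ 2 := by nlinarith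
      have := Real.sqrt_le_sqrt hb
      rw [Real.sqrt_sq (by linarith)] at this
      linarith
  · right
    refine ⟨le_of_lt h, ?_⟩
    have hb : (2 * lam - 1) ^ 2 ≤ 1 + 4 * ξ := by nlinarith
    have := Real.sqrt_le_sqrt hb
    rw [Real.sqrt_sq (by linarith)] at this
    linarith

lemma dot_mulVec_t {p q : Type*} [Fintype p] [Fintype q] (B : Matrix p q ℝ)
    (v : p → ℝ) (w : q → ℝ) : v ⬝ᵥ (B *ᵥ w) = (Bᵀ *ᵥ v) ⬝ᵥ w := by
  rw [Matrix.dotProduct_mulVec, Matrix.mulVec_transpose]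

end Aux

set_option maxHeartbeats 2000000 in
/-- Theorem 4.4 (i): eigenvalue inclusion intervals for the
block-diagonally preconditioned augmented (4×4) matrix. -/
theorem stmt_12 (n : ℕ) (hn : 1 ≤ n)
    (L Mb M : Matrix (Fin n) (Fin n) ℝ)
    (hM : M.IsDiag) (hMpos : ∀ i, 0 < M i i)
    (α : ℝ) (hα : 0 < α) (A : Finset (Fin n))
    (hinv : IsUnit (Real.sqrt α • L +
      Mb * Matrix.diagonal (fun i => if i ∈ A then (0 : ℝ) else 1)).det) :
    let PiI : Matrix (Fin n) (Fin n) ℝ :=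
      Matrix.diagonal (fun i => if i ∈ A then 0 else 1)
    let PiA : Matrix (Fin n) (Fin n) ℝ :=
      Matrix.diagonal (fun i => if i ∈ A then 1 else 0)
    let PA : Matrix {i // i ∈ A} (Fin n) ℝ :=
      (1 : Matrix (Fin n) (Fin n) ℝ).submatrix Subtype.val id
    let Sh : Matrix (Fin n) (Fin n) ℝ :=
      (Real.sqrt α • L + Mb * PiI) * M⁻¹ * (Real.sqrt α • L + Mb * PiI)ᵀ
    let ζ : ℝ := l2OpNorm (Matrix.diagonal (fun i => Real.sqrt (M i i)) *
      (Real.sqrt α • L + Mb * PiI)⁻¹ * (Real.sqrt α • L) *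
      Matrix.diagonal (fun i => (Real.sqrt (M i i))⁻¹))
    let ξ : ℝ := ζ ^ 2 + (1 + ζ) ^ 2
    let J11 : Matrix (Fin n ⊕ Fin n) (Fin n ⊕ Fin n) ℝ :=
      Matrix.fromBlocks M 0 0 (α • M)
    let J12 : Matrix (Fin n ⊕ {i // i ∈ A}) (Fin n ⊕ Fin n) ℝ :=
      Matrix.fromBlocks L (-Mb) 0 (PA * M)
    let Jaug := Matrix.fromBlocks J11 J12ᵀ J12 0
    let Q : Matrix (Fin n ⊕ {i // i ∈ A}) (Fin n ⊕ {i // i ∈ A}) ℝ :=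
      Matrix.fromBlocks 1 (-(Mb * PiA * M⁻¹ * PAᵀ)) 0 1
    let ShA := α⁻¹ • (Q * Matrix.fromBlocks Sh 0 0 (PA * M * PAᵀ) * Qᵀ)
    let P := Matrix.fromBlocks J11 0 0 ShA
    ∀ (lam : ℝ) (z : (Fin n ⊕ Fin n) ⊕ (Fin n ⊕ {i // i ∈ A}) → ℝ), z ≠ 0 →
      Jaug.mulVec z = lam • P.mulVec z →
      ((1 - Real.sqrt (1 + 4 * ξ)) / 2 ≤ lam ∧ lam ≤ (1 - Real.sqrt 3) / 2) ∨
        (1 ≤ lam ∧ lam ≤ (1 + Real.sqrt (1 + 4 * ξ)) / 2) := by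
  intro PiI PiA PA Sh ζ ξ J11 J12 Jaug Q ShA P lam z hz heq
  classical
  -- diagonal facts
  have hMdiag : M = Matrix.diagonal (fun i => M i i) := by
    ext i j
    by_cases h : i = j
    · subst h; simp
    · rw [Matrix.diagonal_apply_ne _ h]; exact hM h
  have hMinv : M⁻¹ = Matrix.diagonal (fun i => (M i i)⁻¹) := by
    apply Matrix.inv_eq_right_inv
    nth_rewrite 1 [hMdiag]
    rw [Matrix.diagonal_mul_diagonal,
      show (fun i => M i i * (M i i)⁻¹) = fun _ => (1:ℝ) from
        funext fun i => mul_inv_cancel₀ (ne_of_gt (hMpos i)), Matrix.diagonal_one]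
  have hMv : ∀ (v : Fin n → ℝ) i, (M *ᵥ v) i = M i i * v i := by
    intro v i
    nth_rewrite 1 [hMdiag]
    rw [Matrix.mulVec_diagonal]
  have hMiv : ∀ (v : Fin n → ℝ) i, (M⁻¹ *ᵥ v) i = (M i i)⁻¹ * v i := by
    intro v i
    rw [hMinv, Matrix.mulVec_diagonal]
  have hMT : Mᵀ = M := by
    nth_rewrite 1 [hMdiag]
    rw [Matrix.diagonal_transpose]
    exact hMdiag.symm
  -- the matrix E
  set E : Matrix (Fin n) (Fin n) ℝ :=
    Real.sqrt α • L + Mb * Matrix.diagonal (fun i => if i ∈ A then (0:ℝ) else 1) with hEdef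
  have hEdet : IsUnit E.det := hinv
  have hET : (E⁻¹)ᵀ * Eᵀ = 1 := by
    rw [← Matrix.transpose_mul, Matrix.mul_nonsing_inv E hEdet, Matrix.transpose_one]
  have hETv : ∀ v : Fin n → ℝ, (E⁻¹)ᵀ *ᵥ (Eᵀ *ᵥ v) = v := by
    intro v
    rw [Matrix.mulVec_mulVec, hET, Matrix.one_mulVec]
  -- components of z
  set x1 : Fin n → ℝ := fun i => z (Sum.inl (Sum.inl i)) with hx1def
  set x2 : Fin n → ℝ := fun i => z (Sum.inl (Sum.inr i)) with hx2def
  set y1 : Fin n → ℝ := fun i => z (Sum.inr (Sum.inl i)) with hy1def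
  set y2 : {i // i ∈ A} → ℝ := fun j => z (Sum.inr (Sum.inr j)) with hy2def
  have hzdef : z = Sum.elim (Sum.elim x1 x2) (Sum.elim y1 y2) := by
    funext i
    rcases i with (i | i) | (i | i) <;> rfl
  have hJaugdef : Jaug = Matrix.fromBlocks J11 J12ᵀ J12 0 := rfl
  have hPdef : P = Matrix.fromBlocks J11 0 0 ShA := rfl
  -- block computation lemmas
  have hJ11m : ∀ v w : Fin n → ℝ,
      J11 *ᵥ Sum.elim v w = Sum.elim (M *ᵥ v) ((α • M) *ᵥ w) := by
    intro v w
    rw [show J11 = Matrix.fromBlocks M 0 0 (α • M) from rfl, Matrix.fromBlocks_mulVec]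
    simp only [Sum.elim_comp_inl, Sum.elim_comp_inr, Matrix.zero_mulVec, add_zero, zero_add]
  have hJ12T : J12ᵀ *ᵥ Sum.elim y1 y2
      = Sum.elim (Lᵀ *ᵥ y1) ((-Mb)ᵀ *ᵥ y1 + (PA * M)ᵀ *ᵥ y2) := by
    rw [show J12 = Matrix.fromBlocks L (-Mb) 0 (PA * M) from rfl,
      Matrix.fromBlocks_transpose, Matrix.fromBlocks_mulVec]
    simp only [Sum.elim_comp_inl, Sum.elim_comp_inr, Matrix.transpose_zero,
      Matrix.zero_mulVec, add_zero, zero_add]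
  rw [hzdef, hJaugdef, hPdef] at heq
  have hTop : Matrix.fromBlocks J11 J12ᵀ J12 0 *ᵥ
        Sum.elim (Sum.elim x1 x2) (Sum.elim y1 y2)
      = Sum.elim (Sum.elim (M *ᵥ x1) ((α • M) *ᵥ x2) + J12ᵀ *ᵥ Sum.elim y1 y2)
        (J12 *ᵥ Sum.elim x1 x2) := by
    rw [Matrix.fromBlocks_mulVec]
    simp only [Sum.elim_comp_inl, Sum.elim_comp_inr, Matrix.zero_mulVec, add_zero]
    rw [hJ11m]
  have hPm : Matrix.fromBlocks J11 0 0 ShA *ᵥ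
        Sum.elim (Sum.elim x1 x2) (Sum.elim y1 y2)
      = Sum.elim (Sum.elim (M *ᵥ x1) ((α • M) *ᵥ x2)) (ShA *ᵥ Sum.elim y1 y2) := by
    rw [Matrix.fromBlocks_mulVec]
    simp only [Sum.elim_comp_inl, Sum.elim_comp_inr, Matrix.zero_mulVec, add_zero, zero_add]
    rw [hJ11m]
  rw [hTop, hPm] at heq
  have E1 : Sum.elim (M *ᵥ x1) ((α • M) *ᵥ x2) + J12ᵀ *ᵥ Sum.elim y1 y2
      = lam • Sum.elim (M *ᵥ x1) ((α • M) *ᵥ x2) := by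
    funext w
    simpa using congrFun heq (Sum.inl w)
  have E2 : J12 *ᵥ Sum.elim x1 x2 = lam • (ShA *ᵥ Sum.elim y1 y2) := by
    funext w
    simpa using congrFun heq (Sum.inr w)
  rw [hJ12T] at E1
  -- the shifted vector
  set u1 : Fin n → ℝ := fun i => (lam - 1) * x1 i with hu1def
  set u2 : Fin n → ℝ := fun i => (lam - 1) * x2 i with hu2def
  have C1 : M *ᵥ u1 = Lᵀ *ᵥ y1 := by
    funext i
    have h := congrFun E1 (Sum.inl i)
    simp only [Pi.add_apply, Sum.elim_inl, Pi.smul_apply, smul_eq_mul] at h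
    have hu : (M *ᵥ u1) i = (lam - 1) * (M *ᵥ x1) i := by
      rw [hMv, hMv, hu1def]
      ring
    rw [hu]
    linear_combination (-1 : ℝ) * h
  have C2 : (α • M) *ᵥ u2 = (-Mb)ᵀ *ᵥ y1 + (PA * M)ᵀ *ᵥ y2 := by
    funext i
    have h := congrFun E1 (Sum.inr i)
    simp only [Pi.add_apply, Sum.elim_inr, Pi.smul_apply, smul_eq_mul] at h
    have hu : ((α • M) *ᵥ u2) i = (lam - 1) * ((α • M) *ᵥ x2) i := by
      rw [Matrix.smul_mulVec, Matrix.smul_mulVec]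
      simp only [Pi.smul_apply, smul_eq_mul]
      rw [hMv, hMv, hu2def]
      ring
    rw [hu]
    simp only [Pi.add_apply]
    linear_combination (-1 : ℝ) * h
  -- scalar quantities
  set sm : Fin n → ℝ := fun i => Real.sqrt (M i i) with hsmdef
  have hsm : ∀ i, 0 < sm i := fun i => Real.sqrt_pos.mpr (hMpos i)
  have hsm2 : ∀ i, sm i ^ 2 = M i i := fun i => Real.sq_sqrt (hMpos i).le
  set cv : Fin n → ℝ := fun i => Real.sqrt α * ((Lᵀ *ᵥ y1) i) * (sm i)⁻¹ with hcvdef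
  set g : Fin n → ℝ := fun i => ((-Mb)ᵀ *ᵥ y1 + (PA * M)ᵀ *ᵥ y2) i with hgdef
  set dv : Fin n → ℝ := fun i => g i * (sm i)⁻¹ with hdvdef
  set av : Fin n → ℝ := fun i => ((Eᵀ *ᵥ y1) i) * (sm i)⁻¹ with havdef
  set wv : {i // i ∈ A} → ℝ :=
    fun j => y2 j - (M j.val j.val)⁻¹ * ((Mbᵀ *ᵥ y1) j.val) with hwvdef
  set bt : Fin n → ℝ := fun i => if h : i ∈ A then sm i * wv ⟨i, h⟩ else 0 with hbtdef
  -- numerator in coordinates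
  have SB : α * ((Sum.elim u1 u2) ⬝ᵥ (J11 *ᵥ Sum.elim u1 u2))
      = (∑ i, cv i ^ 2) + ∑ i, dv i ^ 2 := by
    rw [hJ11m, sumElim_dotProduct_sumElim, mul_add]
    congr 1
    · rw [dotProduct, Finset.mul_sum]
      refine Finset.sum_congr rfl fun i _ => ?_
      have h1 := congrFun C1 i
      have h3 : cv i = Real.sqrt α * ((M *ᵥ u1) i) * (sm i)⁻¹ := by
        simp only [hcvdef]
        rw [h1]
      rw [h3, hMv]
      rw [mul_pow, mul_pow, Real.sq_sqrt hα.le, inv_pow, hsm2]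
      field_simp [ne_of_gt (hMpos i)]
    · rw [dotProduct, Finset.mul_sum]
      refine Finset.sum_congr rfl fun i _ => ?_
      have hai : ((α • M) *ᵥ u2) i = α * (M i i * u2 i) := by
        rw [Matrix.smul_mulVec]
        simp only [Pi.smul_apply, smul_eq_mul]
        rw [hMv]
      have hgi : g i = α * (M i i * u2 i) := by
        simp only [hgdef]
        rw [← C2]
        exact hai
      rw [hai]
      simp only [hdvdef]
      rw [hgi, mul_pow, inv_pow, hsm2]
      field_simp [ne_of_gt (hMpos i)]
  -- Qᵀ *ᵥ Y
  have hW : Qᵀ *ᵥ Sum.elim y1 y2 = Sum.elim y1 wv := by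
    rw [show Q = Matrix.fromBlocks 1 (-(Mb * PiA * M⁻¹ * PAᵀ)) 0 1 from rfl,
      Matrix.fromBlocks_transpose, Matrix.fromBlocks_mulVec]
    simp only [Sum.elim_comp_inl, Sum.elim_comp_inr, Matrix.transpose_zero, Matrix.zero_mulVec,
      Matrix.transpose_one, Matrix.one_mulVec, add_zero, zero_add]
    have hMiT : (M⁻¹)ᵀ = M⁻¹ := by rw [hMinv, Matrix.diagonal_transpose]
    have hPiAT : PiAᵀ = PiA := by
      rw [show PiA = Matrix.diagonal (fun i => if i ∈ A then (1:ℝ) else 0) from rfl,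
        Matrix.diagonal_transpose]
    have hRT : (Mb * PiA * M⁻¹ * PAᵀ)ᵀ = PA * (M⁻¹ * (PiA * Mbᵀ)) := by
      rw [Matrix.transpose_mul, Matrix.transpose_mul, Matrix.transpose_mul,
        Matrix.transpose_transpose, hMiT, hPiAT]
    funext i
    rcases i with i | j
    · rfl
    simp only [Sum.elim_inr, Pi.add_apply]
    rw [Matrix.transpose_neg, Matrix.neg_mulVec, hRT, ← Matrix.mulVec_mulVec,
      ← Matrix.mulVec_mulVec,
      show PA = (1 : Matrix (Fin n) (Fin n) ℝ).submatrix Subtype.val id from rfl,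
      aux_PA_mulVec]
    simp only [Pi.neg_apply]
    rw [hMiv, ← Matrix.mulVec_mulVec,
      show PiA = Matrix.diagonal (fun i => if i ∈ A then (1:ℝ) else 0) from rfl,
      Matrix.mulVec_diagonal, if_pos j.2]
    simp only [hwvdef]
    ring
  have hB0 : Matrix.fromBlocks Sh 0 0 (PA * M * PAᵀ) *ᵥ Sum.elim y1 wv
      = Sum.elim (Sh *ᵥ y1) ((PA * M * PAᵀ) *ᵥ wv) := by
    rw [Matrix.fromBlocks_mulVec]
    simp only [Sum.elim_comp_inl, Sum.elim_comp_inr, Matrix.zero_mulVec, add_zero, zero_add]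
  have hShq : y1 ⬝ᵥ (Sh *ᵥ y1) = ∑ i, av i ^ 2 := by
    rw [show Sh = E * M⁻¹ * Eᵀ from rfl, ← Matrix.mulVec_mulVec, ← Matrix.mulVec_mulVec,
      dot_mulVec_t, dotProduct]
    refine Finset.sum_congr rfl fun i _ => ?_
    rw [hMiv]
    simp only [havdef]
    rw [mul_pow, inv_pow, hsm2]
    ring
  have hPAMq : wv ⬝ᵥ ((PA * M * PAᵀ) *ᵥ wv) = ∑ i, bt i ^ 2 := by
    rw [← Matrix.mulVec_mulVec, ← Matrix.mulVec_mulVec,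
      show PA = (1 : Matrix (Fin n) (Fin n) ℝ).submatrix Subtype.val id from rfl,
      aux_PAT_mulVec, aux_PA_mulVec, dotProduct]
    have hsum : ∑ i, bt i ^ 2 = ∑ j : {i // i ∈ A}, M j.val j.val * wv j ^ 2 := by
      rw [← aux_sum_dite_val A (fun j => M j.val j.val * wv j ^ 2)]
      refine Finset.sum_congr rfl fun i _ => ?_
      by_cases h : i ∈ A
      · simp only [hbtdef, dif_pos h]
        rw [mul_pow, hsm2]
      · simp only [hbtdef, dif_neg h]
        norm_num
    rw [hsum]
    refine Finset.sum_congr rfl fun j _ => ?_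
    rw [hMv]
    simp only [dif_pos j.2, Subtype.coe_eta]
    ring
  have qS : α * ((Sum.elim y1 y2) ⬝ᵥ (ShA *ᵥ Sum.elim y1 y2))
      = (∑ i, av i ^ 2) + ∑ i, bt i ^ 2 := by
    rw [show ShA = α⁻¹ • (Q * Matrix.fromBlocks Sh 0 0 (PA * M * PAᵀ) * Qᵀ) from rfl]
    rw [Matrix.smul_mulVec, dotProduct_smul, smul_eq_mul, ← mul_assoc,
      mul_inv_cancel₀ (ne_of_gt hα), one_mul]
    rw [← Matrix.mulVec_mulVec, ← Matrix.mulVec_mulVec, dot_mulVec_t, hW, hB0,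
      sumElim_dotProduct_sumElim, hShq, hPAMq]
  -- pointwise decomposition of dv
  have hMbT : ∀ i, (Eᵀ *ᵥ y1) i
      = Real.sqrt α * (Lᵀ *ᵥ y1) i + (if i ∈ A then 0 else 1) * (Mbᵀ *ᵥ y1) i := by
    intro i
    have hEt : Eᵀ = Real.sqrt α • Lᵀ
        + Matrix.diagonal (fun i => if i ∈ A then (0:ℝ) else 1) * Mbᵀ := by
      rw [hEdef, Matrix.transpose_add, Matrix.transpose_smul, Matrix.transpose_mul,
        Matrix.diagonal_transpose]
    rw [hEt, Matrix.add_mulVec, Matrix.smul_mulVec, ← Matrix.mulVec_mulVec]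
    simp only [Pi.add_apply, Pi.smul_apply, smul_eq_mul]
    rw [Matrix.mulVec_diagonal]
  have hgy : ∀ i, g i = -((Mbᵀ *ᵥ y1) i)
      + M i i * (if h : i ∈ A then y2 ⟨i, h⟩ else 0) := by
    intro i
    simp only [hgdef, Pi.add_apply]
    rw [Matrix.transpose_neg, Matrix.neg_mulVec, Matrix.transpose_mul, hMT,
      ← Matrix.mulVec_mulVec,
      show PA = (1 : Matrix (Fin n) (Fin n) ℝ).submatrix Subtype.val id from rfl,
      aux_PAT_mulVec]
    simp only [Pi.neg_apply]
    rw [hMv]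
  have hpt : ∀ i, dv i ^ 2 = bt i ^ 2 + (av i - cv i) ^ 2 := by
    intro i
    have hac : av i - cv i = (if i ∈ A then 0 else 1) * (Mbᵀ *ᵥ y1) i * (sm i)⁻¹ := by
      simp only [havdef, hcvdef]
      rw [hMbT i]
      ring
    by_cases h : i ∈ A
    · have h1 : av i - cv i = 0 := by rw [hac, if_pos h]; ring
      have h2 : dv i = bt i := by
        simp only [hdvdef, hbtdef, dif_pos h]
        rw [hgy i, dif_pos h]
        simp only [hwvdef]
        have hms : M i i = sm i * sm i := by rw [← hsm2 i]; ring
        rw [hms]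
        field_simp [ne_of_gt (hsm i)]
        ring
      rw [h1, h2]; ring
    · have h1 : bt i = 0 := by simp only [hbtdef, dif_neg h]
      have h2 : dv i = -(av i - cv i) := by
        simp only [hdvdef]
        rw [hgy i, dif_neg h, hac, if_neg h]
        ring
      rw [h1, h2]; ring
  -- cv = Zmatᵀ *ᵥ av
  set Zmat : Matrix (Fin n) (Fin n) ℝ :=
    Matrix.diagonal sm * E⁻¹ * (Real.sqrt α • L)
      * Matrix.diagonal (fun i => (sm i)⁻¹) with hZmatdef
  have hζdef : ζ = l2OpNorm Zmat := rfl
  have hca : cv = Zmatᵀ *ᵥ av := by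
    have hZT : Zmatᵀ = Matrix.diagonal (fun i => (sm i)⁻¹) *
        ((Real.sqrt α • Lᵀ) * ((E⁻¹)ᵀ * Matrix.diagonal sm)) := by
      rw [hZmatdef, Matrix.transpose_mul, Matrix.transpose_mul, Matrix.transpose_mul,
        Matrix.diagonal_transpose, Matrix.diagonal_transpose, Matrix.transpose_smul]
    have hD1a : Matrix.diagonal sm *ᵥ av = Eᵀ *ᵥ y1 := by
      funext k
      rw [Matrix.mulVec_diagonal]
      simp only [havdef]
      rw [mul_comm (sm k), mul_assoc, inv_mul_cancel₀ (ne_of_gt (hsm k)), mul_one]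
    rw [hZT, ← Matrix.mulVec_mulVec, ← Matrix.mulVec_mulVec, ← Matrix.mulVec_mulVec,
      hD1a, hETv y1, Matrix.smul_mulVec]
    funext i
    rw [Matrix.mulVec_diagonal]
    simp only [hcvdef, Pi.smul_apply, smul_eq_mul]
    ring
  have hξdef : ξ = ζ ^ 2 + (1 + ζ) ^ 2 := rfl
  by_cases hlam : lam = 1
  · right
    subst hlam
    refine ⟨le_refl 1, ?_⟩
    have hξ0 : 0 ≤ ξ := by rw [hξdef]; positivity
    have h1s : Real.sqrt 1 ≤ Real.sqrt (1 + 4 * ξ) := Real.sqrt_le_sqrt (by linarith)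
    rw [Real.sqrt_one] at h1s
    linarith
  by_cases hY : y1 = 0 ∧ y2 = 0
  · exfalso
    have hlam1 : lam - 1 ≠ 0 := sub_ne_zero.mpr hlam
    have hx10 : x1 = 0 := by
      funext i
      have h := congrFun C1 i
      rw [hY.1, Matrix.mulVec_zero, hMv] at h
      simp only [Pi.zero_apply] at h
      rcases mul_eq_zero.mp h with h' | h'
      · exact absurd h' (ne_of_gt (hMpos i))
      · simp only [hu1def] at h'
        rcases mul_eq_zero.mp h' with h'' | h''
        · exact absurd h'' hlam1
        · exact h''
    have hx20 : x2 = 0 := by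
      funext i
      have h := congrFun C2 i
      rw [hY.1, hY.2, Matrix.mulVec_zero, Matrix.mulVec_zero] at h
      rw [Matrix.smul_mulVec] at h
      simp only [Pi.add_apply, Pi.zero_apply, Pi.smul_apply, smul_eq_mul] at h
      rw [hMv] at h
      have h0 : α * (M i i * u2 i) = 0 := by rw [h]; ring
      rcases mul_eq_zero.mp h0 with h' | h'
      · exact absurd h' (ne_of_gt hα)
      · rcases mul_eq_zero.mp h' with h'' | h''
        · exact absurd h'' (ne_of_gt (hMpos i))
        · simp only [hu2def] at h''
          rcases mul_eq_zero.mp h'' with h3 | h3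
          · exact absurd h3 hlam1
          · exact h3
    apply hz
    rw [hzdef, hx10, hx20, hY.1, hY.2]
    funext i
    rcases i with (i | i) | (i | i) <;> simp
  · -- main case
    have hXu : (lam - 1) • Sum.elim x1 x2 = Sum.elim u1 u2 := by
      funext i
      rcases i with i | i <;> simp [hu1def, hu2def]
    have C0 : J11 *ᵥ Sum.elim u1 u2 = J12ᵀ *ᵥ Sum.elim y1 y2 := by
      rw [hJ11m, hJ12T, C1, C2]
    have SA : (Sum.elim u1 u2) ⬝ᵥ (J11 *ᵥ Sum.elim u1 u2)
        = lam * (lam - 1) * ((Sum.elim y1 y2) ⬝ᵥ (ShA *ᵥ Sum.elim y1 y2)) := by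
      rw [C0, dot_mulVec_t, Matrix.transpose_transpose, ← hXu, Matrix.mulVec_smul, E2]
      rw [smul_dotProduct, smul_dotProduct, smul_eq_mul, smul_eq_mul,
        dotProduct_comm]
      ring
    have key : lam * (lam - 1) * ((∑ i, av i ^ 2) + ∑ i, bt i ^ 2)
        = (∑ i, cv i ^ 2) + ∑ i, dv i ^ 2 := by
      rw [← qS, ← SB, SA]
      ring
    have hav_nonneg : (0:ℝ) ≤ ∑ i, av i ^ 2 := by positivity
    have hbt_nonneg : (0:ℝ) ≤ ∑ i, bt i ^ 2 := by positivity
    have hQp_pos : 0 < (∑ i, av i ^ 2) + ∑ i, bt i ^ 2 := by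
      rcases eq_or_lt_of_le (by positivity : (0:ℝ) ≤ (∑ i, av i ^ 2) + ∑ i, bt i ^ 2)
        with h0 | h0
      · exfalso
        have hsa : ∑ i, av i ^ 2 = 0 := by linarith
        have hsb : ∑ i, bt i ^ 2 = 0 := by linarith
        have hav0 : ∀ i, av i = 0 := by
          intro i
          have := (Finset.sum_eq_zero_iff_of_nonneg
            (fun i _ => sq_nonneg (av i))).mp hsa i (Finset.mem_univ i)
          exact pow_eq_zero_iff two_ne_zero |>.mp this
        have hbt0 : ∀ i, bt i = 0 := by
          intro i
          have := (Finset.sum_eq_zero_iff_of_nonneg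
            (fun i _ => sq_nonneg (bt i))).mp hsb i (Finset.mem_univ i)
          exact pow_eq_zero_iff two_ne_zero |>.mp this
        have hETy0 : Eᵀ *ᵥ y1 = 0 := by
          funext i
          have h := hav0 i
          simp only [havdef] at h
          rcases mul_eq_zero.mp h with h' | h'
          · exact h'
          · exact absurd h' (inv_ne_zero (ne_of_gt (hsm i)))
        have hy10 : y1 = 0 := by
          rw [← hETv y1, hETy0, Matrix.mulVec_zero]
        have hy20 : y2 = 0 := by
          funext j
          simp only [Pi.zero_apply]
          have hb := hbt0 j.val
          simp only [hbtdef, dif_pos j.2, Subtype.coe_eta] at hb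
          rcases mul_eq_zero.mp hb with h' | h'
          · exact absurd h' (ne_of_gt (hsm j.val))
          · simp only [hwvdef, hy10, Matrix.mulVec_zero, Pi.zero_apply] at h'
            linarith [h']
        exact hY ⟨hy10, hy20⟩
      · exact h0
    have hNd : (∑ i, cv i ^ 2) + ∑ i, dv i ^ 2
        = ((∑ i, cv i ^ 2) + ∑ i, (av i - cv i) ^ 2) + ∑ i, bt i ^ 2 := by
      have h : ∑ i, dv i ^ 2 = ∑ i, (bt i ^ 2 + (av i - cv i) ^ 2) :=
        Finset.sum_congr rfl fun i _ => hpt i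
      rw [h, Finset.sum_add_distrib]
      ring
    have hupper : (∑ i, cv i ^ 2) + ∑ i, (av i - cv i) ^ 2 ≤ ξ * ∑ i, av i ^ 2 := by
      have h := core_upper Zmat av
      rw [← hca] at h
      rw [hξdef, hζdef]
      exact h
    have hlower : (1/2) * (∑ i, av i ^ 2)
        ≤ (∑ i, cv i ^ 2) + ∑ i, (av i - cv i) ^ 2 := by
      rw [Finset.mul_sum, ← Finset.sum_add_distrib]
      refine Finset.sum_le_sum fun i _ => ?_
      nlinarith [sq_nonneg (2 * cv i - av i)]
    have hξ1 : 1 ≤ ξ := by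
      have hz0 := l2OpNorm_nonneg Zmat
      rw [hξdef, hζdef]
      nlinarith [hz0]
    have h1 : 1/2 * ((∑ i, av i ^ 2) + ∑ i, bt i ^ 2)
        ≤ lam * (lam - 1) * ((∑ i, av i ^ 2) + ∑ i, bt i ^ 2) := by
      rw [key, hNd]
      linarith [hlower, hbt_nonneg]
    have h2 : lam * (lam - 1) * ((∑ i, av i ^ 2) + ∑ i, bt i ^ 2)
        ≤ ξ * ((∑ i, av i ^ 2) + ∑ i, bt i ^ 2) := by
      rw [key, hNd]
      nlinarith [hupper, mul_nonneg (by linarith [hξ1] : (0:ℝ) ≤ ξ - 1) hbt_nonneg]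
    have hle1 : 1/2 ≤ lam * (lam - 1) := (mul_le_mul_iff_of_pos_right hQp_pos).mp h1
    have hle2 : lam * (lam - 1) ≤ ξ := (mul_le_mul_iff_of_pos_right hQp_pos).mp h2
    have hr : lam * (lam - 1) = lam ^ 2 - lam := by ring
    rw [hr] at hle1 hle2
    exact interval_lemma ξ lam hle1 hle2
end

section
/- With the setup of the context (in particular √α L + M̄ Π_I invertible), let J^red be the symmetric block matrix [[M, Lᵀ],[L, −(1/α) M̄ M⁻¹ Π_I M̄ᵀ]] and let 𝒫 = blkdiag(M, (1/α)Ŝ) be the block-diagonal preconditioner. Then every real number λ for which there exists a nonzero vector z with J^red z = λ·(𝒫 z) lies in I⁻ ∪ I⁺, where I⁻ = [ (−ξ + 1 − √((ξ + 1)² + 4ζ²))/2 , (1 − √3)/2 ] and I⁺ = [ 1 , (1 + √(1 + 4ζ²))/2 ]. -/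
open Matrix

noncomputable def evec {n : Type*} [Fintype n] (v : n → ℝ) : EuclideanSpace ℝ n :=
  (WithLp.equiv 2 _).symm v

lemma inner_evec {n : Type*} [Fintype n] (v w : n → ℝ) :
    (inner ℝ (evec v) (evec w) : ℝ) = v ⬝ᵥ w := by
  simp [evec, PiLp.inner_apply, RCLike.inner_apply, dotProduct, mul_comm]

lemma norm_evec_sq {n : Type*} [Fintype n] (v : n → ℝ) : ‖evec v‖ ^ 2 = v ⬝ᵥ v := by
  rw [← inner_evec]; exact (real_inner_self_eq_norm_sq _).symm

lemma cs_evec {n : Type*} [Fintype n] (v w : n → ℝ) : |v ⬝ᵥ w| ≤ ‖evec v‖ * ‖evec w‖ := by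
  rw [← inner_evec]; exact abs_real_inner_le_norm _ _

lemma opnorm_mulVec {m n : Type*} [Fintype m] [Fintype n] [DecidableEq n]
    (A : Matrix m n ℝ) (v : n → ℝ) :
    ‖evec (A *ᵥ v)‖ ≤ l2OpNorm A * ‖evec v‖ := by
  have : evec (A *ᵥ v) = LinearMap.toContinuousLinearMap (Matrix.toEuclideanLin A) (evec v) := rfl
  rw [this]
  exact (LinearMap.toContinuousLinearMap (Matrix.toEuclideanLin A)).le_opNorm _

set_option maxHeartbeats 2000000 in
lemma core (ζ lam ss st sc : ℝ)
    (hζ : 0 ≤ ζ)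
    (hss : 0 < ss) (hst : 0 ≤ st) (hsc : 0 ≤ sc)
    (htz : st ≤ ζ * ss) (hcz : sc ≤ (1 + ζ) * ss)
    (htri : ss ≤ st + sc)
    (heq : st ^ 2 + sc ^ 2 * (1 - lam) = ss ^ 2 * (lam ^ 2 - lam)) :
    ((-(ζ^2 + (1+ζ)^2) + 1 - Real.sqrt (((ζ^2 + (1+ζ)^2) + 1) ^ 2 + 4 * ζ ^ 2)) / 2 ≤ lam ∧
        lam ≤ (1 - Real.sqrt 3) / 2) ∨
      (1 ≤ lam ∧ lam ≤ (1 + Real.sqrt (1 + 4 * ζ ^ 2)) / 2) := by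
  have hss2 : 0 < ss ^ 2 := by positivity
  have ht : st ^ 2 ≤ ζ ^ 2 * ss ^ 2 := by nlinarith
  have hc : sc ^ 2 ≤ (ζ^2 + (1+ζ)^2) * ss ^ 2 := by nlinarith
  rcases le_or_gt 1 lam with h1 | h1
  · right
    refine ⟨h1, ?_⟩
    have h2 : ss ^ 2 * (lam ^ 2 - lam) ≤ ss ^ 2 * ζ ^ 2 := by
      nlinarith [mul_nonneg (sq_nonneg sc) (sub_nonneg.mpr h1)]
    have hq : lam ^ 2 - lam ≤ ζ ^ 2 := le_of_mul_le_mul_left h2 hss2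
    have hr : Real.sqrt (1 + 4 * ζ ^ 2) ^ 2 = 1 + 4 * ζ ^ 2 :=
      Real.sq_sqrt (by positivity)
    have hr0 : 0 ≤ Real.sqrt (1 + 4 * ζ ^ 2) := Real.sqrt_nonneg _
    nlinarith
  · left
    constructor
    · have hprod : 0 ≤ ((ζ^2 + (1+ζ)^2) * ss ^ 2 - sc ^ 2) * (1 - lam) :=
        mul_nonneg (by linarith) (by linarith)
      have hQs : ss ^ 2 * (lam ^ 2 + ((ζ^2 + (1+ζ)^2) - 1) * lam - (ζ ^ 2 + (ζ^2 + (1+ζ)^2))) ≤ ss ^ 2 * 0 := by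
        nlinarith
      have hQ : lam ^ 2 + ((ζ^2 + (1+ζ)^2) - 1) * lam - (ζ ^ 2 + (ζ^2 + (1+ζ)^2)) ≤ 0 :=
        le_of_mul_le_mul_left hQs hss2
      have hr : Real.sqrt (((ζ^2 + (1+ζ)^2) + 1) ^ 2 + 4 * ζ ^ 2) ^ 2 = ((ζ^2 + (1+ζ)^2) + 1) ^ 2 + 4 * ζ ^ 2 :=
        Real.sq_sqrt (by positivity)
      have hr0 : 0 ≤ Real.sqrt (((ζ^2 + (1+ζ)^2) + 1) ^ 2 + 4 * ζ ^ 2) := Real.sqrt_nonneg _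
      nlinarith [sq_nonneg (2 * lam + (ζ^2 + (1+ζ)^2) - 1 + Real.sqrt (((ζ^2 + (1+ζ)^2) + 1) ^ 2 + 4 * ζ ^ 2))]
    · by_contra hcon
      push_neg at hcon
      have hg : Real.sqrt 3 ^ 2 = 3 := Real.sq_sqrt (by norm_num)
      have hg0 : 0 ≤ Real.sqrt 3 := Real.sqrt_nonneg _
      have hlneg : lam < 0 := by
        rcases lt_or_ge lam 0 with h | h
        · exact h
        · exfalso
          rcases eq_or_lt_of_le h with h0 | h0
          · rw [← h0] at heq
            have e1 : st ^ 2 = 0 := by nlinarith [sq_nonneg sc, sq_nonneg st]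
            have e2 : sc ^ 2 = 0 := by nlinarith [sq_nonneg sc, sq_nonneg st]
            have f1 : st = 0 := by
              have := sq_nonneg st
              nlinarith [abs_nonneg st, sq_abs st]
            have f2 : sc = 0 := by nlinarith [sq_nonneg sc]
            linarith
          · nlinarith [mul_pos hss2 (mul_pos h0 (sub_pos.mpr h1)),
              mul_nonneg (sq_nonneg sc) (le_of_lt (sub_pos.mpr h1))]
      obtain ⟨μ, hμdef⟩ : ∃ μ : ℝ, μ = -lam := ⟨-lam, rfl⟩
      have hμ0 : 0 < μ := by rw [hμdef]; linarith
      have heq' : st ^ 2 + sc ^ 2 * (1 + μ) = ss ^ 2 * (μ ^ 2 + μ) := by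
        rw [hμdef]; ring_nf; ring_nf at heq; linarith
      have hμb : 2 * μ ^ 2 + 2 * μ < 1 := by
        have hgb : 1 + 2 * μ < Real.sqrt 3 := by rw [hμdef]; linarith
        nlinarith
      have hcμ : sc ^ 2 ≤ μ * ss ^ 2 := by
        have h3 : sc ^ 2 * (1 + μ) ≤ ss ^ 2 * (μ ^ 2 + μ) := by nlinarith [sq_nonneg st]
        nlinarith
      have hscss : sc < ss := by nlinarith
      have hstb : ss - sc ≤ st := by linarith
      have hkey : (2 + μ) * sc ^ 2 - 2 * ss * sc + (1 - μ - μ ^ 2) * ss ^ 2 ≤ 0 := by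
        nlinarith [sq_nonneg (ss - sc)]
      nlinarith [sq_nonneg ((2 + μ) * sc - ss), mul_pos hμ0 hμ0, mul_pos (mul_pos hμ0 hμ0) hμ0,
        mul_pos hμ0 hss2, mul_pos (mul_pos hμ0 hμ0) hss2]

set_option maxHeartbeats 1000000 in
/-- Theorem 4.4 (ii): eigenvalue inclusion intervals for the
block-diagonally preconditioned reduced (2×2) matrix. -/
theorem stmt_13 (n : ℕ) (hn : 1 ≤ n)
    (L Mb M Pi : Matrix (Fin n) (Fin n) ℝ)
    (hM : M.IsDiag) (hMpos : ∀ i, 0 < M i i)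
    (hPi : Pi.IsDiag) (hPi01 : ∀ i, Pi i i = 0 ∨ Pi i i = 1)
    (α : ℝ) (hα : 0 < α)
    (hinv : IsUnit (Real.sqrt α • L + Mb * Pi).det) :
    let Sh : Matrix (Fin n) (Fin n) ℝ :=
      (Real.sqrt α • L + Mb * Pi) * M⁻¹ * (Real.sqrt α • L + Mb * Pi)ᵀ
    let ζ : ℝ := l2OpNorm (Matrix.diagonal (fun i => Real.sqrt (M i i)) *
      (Real.sqrt α • L + Mb * Pi)⁻¹ * (Real.sqrt α • L) *
      Matrix.diagonal (fun i => (Real.sqrt (M i i))⁻¹))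
    let ξ : ℝ := ζ ^ 2 + (1 + ζ) ^ 2
    let Jred : Matrix (Fin n ⊕ Fin n) (Fin n ⊕ Fin n) ℝ :=
      Matrix.fromBlocks M Lᵀ L (-(α⁻¹ • (Mb * M⁻¹ * Pi * Mbᵀ)))
    let P : Matrix (Fin n ⊕ Fin n) (Fin n ⊕ Fin n) ℝ :=
      Matrix.fromBlocks M 0 0 (α⁻¹ • Sh)
    ∀ (lam : ℝ) (z : Fin n ⊕ Fin n → ℝ), z ≠ 0 →
      Jred.mulVec z = lam • P.mulVec z →
      ((-ξ + 1 - Real.sqrt ((ξ + 1) ^ 2 + 4 * ζ ^ 2)) / 2 ≤ lam ∧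
          lam ≤ (1 - Real.sqrt 3) / 2) ∨
        (1 ≤ lam ∧ lam ≤ (1 + Real.sqrt (1 + 4 * ζ ^ 2)) / 2) := by
  intro Sh ζ ξ Jred P lam z hz hev
  -- abbreviations
  set E : Matrix (Fin n) (Fin n) ℝ := Real.sqrt α • L + Mb * Pi with hEdef
  set D : Matrix (Fin n) (Fin n) ℝ := Matrix.diagonal (fun i => Real.sqrt (M i i)) with hDdef
  set Di : Matrix (Fin n) (Fin n) ℝ := Matrix.diagonal (fun i => (Real.sqrt (M i i))⁻¹) with hDidef
  set Hm : Matrix (Fin n) (Fin n) ℝ := D * E⁻¹ * (Real.sqrt α • L) * Di with hHmdef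
  have hζdef : ζ = l2OpNorm Hm := rfl
  have hξdef : ξ = ζ ^ 2 + (1 + ζ) ^ 2 := rfl
  have hζ0 : 0 ≤ ζ := by rw [hζdef]; exact norm_nonneg _
  -- scalar facts
  have hsα : 0 < Real.sqrt α := Real.sqrt_pos.mpr hα
  have hαs : Real.sqrt α * Real.sqrt α = α := Real.mul_self_sqrt hα.le
  -- diagonal matrix facts
  have hd : ∀ i, 0 < Real.sqrt (M i i) := fun i => Real.sqrt_pos.mpr (hMpos i)
  have hDDi : D * Di = 1 := by
    rw [hDdef, hDidef, diagonal_mul_diagonal]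
    rw [show (fun i => Real.sqrt (M i i) * (Real.sqrt (M i i))⁻¹) = fun _ : Fin n => (1:ℝ) from
      funext fun i => mul_inv_cancel₀ (ne_of_gt (hd i)), diagonal_one]
  have hDiD : Di * D = 1 := by
    rw [hDdef, hDidef, diagonal_mul_diagonal]
    rw [show (fun i => (Real.sqrt (M i i))⁻¹ * Real.sqrt (M i i)) = fun _ : Fin n => (1:ℝ) from
      funext fun i => inv_mul_cancel₀ (ne_of_gt (hd i)), diagonal_one]
  have hMDD : M = D * D := by
    conv_lhs => rw [← hM.diagonal_diag]
    rw [hDdef, diagonal_mul_diagonal]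
    exact congrArg _ (funext fun i => (Real.mul_self_sqrt (hMpos i).le).symm)
  have hDinv : ∀ X : Matrix (Fin n) (Fin n) ℝ, M * (Di * Di) = 1 := by
    intro _
    rw [hMDD, Matrix.mul_assoc, ← Matrix.mul_assoc D Di Di, hDDi, Matrix.one_mul, hDDi]
  have hMinv : M⁻¹ = Di * Di := Matrix.inv_eq_right_inv (hDinv 1)
  have hEiE : E⁻¹ * E = 1 := Matrix.nonsing_inv_mul E hinv
  have hEEi : E * E⁻¹ = 1 := Matrix.mul_nonsing_inv E hinv
  have hTEi : E⁻¹ᵀ * Eᵀ = 1 := by rw [← transpose_mul, hEEi, transpose_one]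
  have hEiT : Eᵀ * E⁻¹ᵀ = 1 := by rw [← transpose_mul, hEiE, transpose_one]
  have cDDi : ∀ X : Matrix (Fin n) (Fin n) ℝ, D * (Di * X) = X := fun X => by
    rw [← Matrix.mul_assoc, hDDi, Matrix.one_mul]
  have cDiD : ∀ X : Matrix (Fin n) (Fin n) ℝ, Di * (D * X) = X := fun X => by
    rw [← Matrix.mul_assoc, hDiD, Matrix.one_mul]
  have cEiE : ∀ X : Matrix (Fin n) (Fin n) ℝ, E⁻¹ * (E * X) = X := fun X => by
    rw [← Matrix.mul_assoc, hEiE, Matrix.one_mul]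
  have cEEi : ∀ X : Matrix (Fin n) (Fin n) ℝ, E * (E⁻¹ * X) = X := fun X => by
    rw [← Matrix.mul_assoc, hEEi, Matrix.one_mul]
  have cTEi : ∀ X : Matrix (Fin n) (Fin n) ℝ, E⁻¹ᵀ * (Eᵀ * X) = X := fun X => by
    rw [← Matrix.mul_assoc, hTEi, Matrix.one_mul]
  have cEiT : ∀ X : Matrix (Fin n) (Fin n) ℝ, Eᵀ * (E⁻¹ᵀ * X) = X := fun X => by
    rw [← Matrix.mul_assoc, hEiT, Matrix.one_mul]
  -- Pi facts
  have hPiT : Piᵀ = Pi := by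
    conv_lhs => rw [← hPi.diagonal_diag]
    rw [diagonal_transpose, hPi.diagonal_diag]
  have hPiPi0 : Pi * (M⁻¹ * Pi) = M⁻¹ * Pi := by
    rw [hMinv, hDidef, diagonal_mul_diagonal]
    conv_lhs => rw [← hPi.diagonal_diag]
    conv_rhs => rw [← hPi.diagonal_diag]
    rw [diagonal_mul_diagonal, diagonal_mul_diagonal]
    apply congrArg; funext i
    rcases hPi01 i with h | h <;> simp only [Matrix.diag_apply] <;> rw [h] <;> ring
  have cPiPi : ∀ X : Matrix (Fin n) (Fin n) ℝ, Pi * (M⁻¹ * (Pi * X)) = M⁻¹ * (Pi * X) :=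
    fun X => by
      rw [← Matrix.mul_assoc M⁻¹ Pi X, ← Matrix.mul_assoc, ← Matrix.mul_assoc, Matrix.mul_assoc Pi,
        hPiPi0]
  have hC : Mb * M⁻¹ * Pi * Mbᵀ = (Mb * Pi) * M⁻¹ * (Mb * Pi)ᵀ := by
    rw [transpose_mul, hPiT]
    simp only [Matrix.mul_assoc]
    rw [cPiPi]
  have hDT : Dᵀ = D := by
    rw [hDdef, diagonal_transpose]
  have hDiT : Diᵀ = Di := by
    rw [hDidef, diagonal_transpose]
  -- component equations
  have hJ : Jred = Matrix.fromBlocks M Lᵀ L (-(α⁻¹ • (Mb * M⁻¹ * Pi * Mbᵀ))) := rfl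
  have hP : P = Matrix.fromBlocks M 0 0 (α⁻¹ • Sh) := rfl
  have hShdef : Sh = E * M⁻¹ * Eᵀ := rfl
  rw [hJ, hP, fromBlocks_mulVec, fromBlocks_mulVec] at hev
  set x : Fin n → ℝ := z ∘ Sum.inl with hxdef
  set y : Fin n → ℝ := z ∘ Sum.inr with hydef
  have eq1 : M *ᵥ x + Lᵀ *ᵥ y = lam • (M *ᵥ x) := by
    funext i
    simpa using congrFun hev (Sum.inl i)
  have eq2 : L *ᵥ x + (-(α⁻¹ • (Mb * M⁻¹ * Pi * Mbᵀ))) *ᵥ y = lam • ((α⁻¹ • Sh) *ᵥ y) := by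
    funext i
    simpa using congrFun hev (Sum.inr i)
  set u : Fin n → ℝ := D *ᵥ x with hudef
  set w : Fin n → ℝ := (Real.sqrt α)⁻¹ • ((Di * Eᵀ) *ᵥ y) with hwdef
  -- whitened equation 1
  have A1 : Hmᵀ * (Di * Eᵀ) = Real.sqrt α • (Di * Lᵀ) := by
    rw [hHmdef]
    simp only [transpose_mul, transpose_smul, hDT, hDiT, Matrix.mul_assoc, Matrix.smul_mul,
      Matrix.mul_smul, cDDi, cDiD, cTEi, cEiT, hTEi, hEiT, Matrix.mul_one, Matrix.one_mul]
  have key1 : Hmᵀ *ᵥ w = (Di * Lᵀ) *ᵥ y := by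
    rw [hwdef, mulVec_smul, mulVec_mulVec, A1, smul_mulVec, smul_smul,
      inv_mul_cancel₀ (ne_of_gt hsα), one_smul]
  have b1 : Di *ᵥ (M *ᵥ x) = u := by
    rw [mulVec_mulVec, hMDD, ← Matrix.mul_assoc, hDiD, Matrix.one_mul, hudef]
  have heq1 : u + Hmᵀ *ᵥ w = lam • u := by
    have h := congrArg (fun v => Di *ᵥ v) eq1
    simp only [mulVec_add, mulVec_smul] at h
    rw [b1] at h
    rw [key1, ← mulVec_mulVec]
    exact h
  -- whitened equation 2
  have hsαinv : Real.sqrt α * α⁻¹ = (Real.sqrt α)⁻¹ := by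
    rw [show α⁻¹ = (Real.sqrt α * Real.sqrt α)⁻¹ by rw [hαs], mul_inv, ← mul_assoc,
      mul_inv_cancel₀ (ne_of_gt hsα), one_mul]
  have c1 : Real.sqrt α • ((D * E⁻¹) *ᵥ (L *ᵥ x)) = Hm *ᵥ u := by
    rw [hudef, mulVec_mulVec, mulVec_mulVec, ← smul_mulVec]
    congr 1
    rw [hHmdef]
    simp only [Matrix.mul_assoc, Matrix.smul_mul, Matrix.mul_smul, cDiD, hDiD, hDDi,
      Matrix.mul_one, Matrix.one_mul]
  have c3m : (D * E⁻¹) * Sh = Di * Eᵀ := by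
    rw [hShdef, hMinv]
    simp only [Matrix.mul_assoc, cEiE, cDDi, cDiD]
  have c3 : Real.sqrt α • ((D * E⁻¹) *ᵥ ((α⁻¹ • Sh) *ᵥ y)) = w := by
    rw [hwdef]
    simp only [smul_mulVec, mulVec_smul, mulVec_mulVec, smul_smul]
    rw [hsαinv, c3m]
  have h1H : 1 - Hm = D * E⁻¹ * (Mb * Pi) * Di := by
    have hE2 : E - Real.sqrt α • L = Mb * Pi := by rw [hEdef]; exact add_sub_cancel_left _ _
    have hone : D * E⁻¹ * E * Di = 1 := by
      rw [Matrix.mul_assoc D E⁻¹ E, hEiE, Matrix.mul_one, hDDi]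
    rw [hHmdef, ← hE2, Matrix.mul_sub, Matrix.sub_mul, hone]
  have h1HT : 1 - Hmᵀ = Di * ((Mb * Pi)ᵀ * (E⁻¹ᵀ * D)) := by
    have h := congrArg Matrix.transpose h1H
    rw [transpose_sub, transpose_one] at h
    rw [h]
    simp only [transpose_mul, hDT, hDiT, Matrix.mul_assoc]
  have A2 : (D * E⁻¹) * (Mb * M⁻¹ * Pi * Mbᵀ) = ((1 - Hm) * (1 - Hmᵀ)) * (Di * Eᵀ) := by
    rw [hC, hMinv, h1H, h1HT]
    simp only [Matrix.mul_assoc, transpose_mul, hDT, hDiT, cDDi, cDiD, cEiE, cEEi, cTEi, cEiT,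
      hTEi, hEiT, hDDi, hDiD, Matrix.mul_one, Matrix.one_mul]
  have c2 : Real.sqrt α • ((D * E⁻¹) *ᵥ ((α⁻¹ • (Mb * M⁻¹ * Pi * Mbᵀ)) *ᵥ y)) =
      ((1 - Hm) * (1 - Hmᵀ)) *ᵥ w := by
    rw [hwdef]
    simp only [smul_mulVec, mulVec_smul, mulVec_mulVec, smul_smul]
    rw [hsαinv, A2]
  have heq2 : Hm *ᵥ u - ((1 - Hm) * (1 - Hmᵀ)) *ᵥ w = lam • w := by
    have h := congrArg (fun v => Real.sqrt α • ((D * E⁻¹) *ᵥ v)) eq2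
    simp only [neg_mulVec, mulVec_add, mulVec_neg, smul_add, smul_neg, mulVec_smul] at h
    rw [c1, c2, smul_comm (Real.sqrt α) lam, c3] at h
    rw [sub_eq_add_neg]
    exact h
  -- nonvanishing
  have huw : ¬(u = 0 ∧ w = 0) := by
    rintro ⟨hu0, hw0⟩
    apply hz
    have hx0 : x = 0 := by
      have hxx : Di *ᵥ u = x := by rw [hudef, mulVec_mulVec, hDiD, one_mulVec]
      rw [← hxx, hu0, mulVec_zero]
    have hy0 : y = 0 := by
      have h0 : (Di * Eᵀ) *ᵥ y = 0 := by
        have hh := hw0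
        rw [hwdef] at hh
        rcases smul_eq_zero.mp hh with h | h
        · exact absurd h (inv_ne_zero (ne_of_gt hsα))
        · exact h
      have hyy : (E⁻¹ᵀ * D) *ᵥ ((Di * Eᵀ) *ᵥ y) = y := by
        rw [mulVec_mulVec, show (E⁻¹ᵀ * D) * (Di * Eᵀ) = 1 from by
          simp only [Matrix.mul_assoc, cDDi, hTEi], one_mulVec]
      rw [← hyy, h0, mulVec_zero]
    funext i
    cases i with
    | inl i => exact congrFun hx0 i
    | inr i => exact congrFun hy0 i
  by_cases hw0 : w = 0
  · -- w = 0 : then lam = 1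
    have hu0 : u ≠ 0 := fun h => huw ⟨h, hw0⟩
    have hlam : lam = 1 := by
      have h := heq1
      rw [hw0, mulVec_zero, add_zero] at h
      by_contra hne
      have hz2 : (lam - 1) • u = 0 := by rw [sub_smul, one_smul, ← h, sub_self]
      rcases smul_eq_zero.mp hz2 with h' | h'
      · exact hne (by linarith [sub_eq_zero.mp h'])
      · exact hu0 h'
    right
    have h1 : (1 : ℝ) ≤ Real.sqrt (1 + 4 * ζ ^ 2) := by
      have h2 := Real.sqrt_le_sqrt (show (1:ℝ) ≤ 1 + 4 * ζ ^ 2 by nlinarith [sq_nonneg ζ])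
      rwa [Real.sqrt_one] at h2
    refine ⟨le_of_eq hlam.symm, ?_⟩
    rw [hlam]
    linarith
  · -- w ≠ 0
    have hewnz : evec w ≠ 0 := fun h => hw0 ((WithLp.equiv 2 (Fin n → ℝ)).symm.injective h)
    have hss : 0 < ‖evec w‖ := norm_pos_iff.mpr hewnz
    set p : Fin n → ℝ := Hmᵀ *ᵥ w with hpd
    set q : Fin n → ℝ := w - p with hqd
    have hpdef : p = (lam - 1) • u := by
      have h := eq_sub_of_add_eq' heq1
      rw [h, sub_smul, one_smul]
    have h1q : (1 - Hmᵀ) *ᵥ w = q := by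
      rw [sub_mulVec, one_mulVec, ← hpd]
    have dq : (((1 - Hm) * (1 - Hmᵀ)) *ᵥ w) ⬝ᵥ w = q ⬝ᵥ q := by
      rw [← mulVec_mulVec, h1q, dotProduct_comm, dotProduct_mulVec, ← mulVec_transpose,
        transpose_sub, transpose_one, h1q]
    have du : (Hm *ᵥ u) ⬝ᵥ w = (lam - 1) * (u ⬝ᵥ u) := by
      rw [dotProduct_comm, dotProduct_mulVec, ← mulVec_transpose, ← hpd, hpdef,
        smul_dotProduct, smul_eq_mul]
    have hdot : (lam - 1) * (u ⬝ᵥ u) - q ⬝ᵥ q = lam * (w ⬝ᵥ w) := by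
      have h := congrArg (fun v => v ⬝ᵥ w) heq2
      simp only [sub_dotProduct, smul_dotProduct, smul_eq_mul] at h
      rw [du, dq] at h
      exact h
    have hT : p ⬝ᵥ p = (lam - 1) ^ 2 * (u ⬝ᵥ u) := by
      rw [hpdef, smul_dotProduct, dotProduct_smul, smul_eq_mul, smul_eq_mul]
      ring
    have hnp : ‖evec p‖ ≤ ζ * ‖evec w‖ := by
      rcases eq_or_lt_of_le (norm_nonneg (evec p)) with h0 | h0
      · rw [← h0]; positivity
      · have hppval : p ⬝ᵥ p = w ⬝ᵥ (Hm *ᵥ p) := by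
          nth_rewrite 1 [hpd]
          rw [mulVec_transpose, ← dotProduct_mulVec]
        have h1 : p ⬝ᵥ p ≤ ‖evec w‖ * (ζ * ‖evec p‖) := by
          calc p ⬝ᵥ p = w ⬝ᵥ (Hm *ᵥ p) := hppval
            _ ≤ |w ⬝ᵥ (Hm *ᵥ p)| := le_abs_self _
            _ ≤ ‖evec w‖ * ‖evec (Hm *ᵥ p)‖ := cs_evec _ _
            _ ≤ ‖evec w‖ * (ζ * ‖evec p‖) := by
                have h2 := opnorm_mulVec Hm p
                rw [← hζdef] at h2
                exact mul_le_mul_of_nonneg_left h2 (norm_nonneg _)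
        have h3 : ‖evec p‖ * ‖evec p‖ ≤ (ζ * ‖evec w‖) * ‖evec p‖ := by
          have h4 := norm_evec_sq p
          nlinarith
        exact le_of_mul_le_mul_right h3 h0
    have hnq : ‖evec q‖ ≤ (1 + ζ) * ‖evec w‖ := by
      have hqe : evec q = evec w - evec p := rfl
      calc ‖evec q‖ = ‖evec w - evec p‖ := by rw [hqe]
        _ ≤ ‖evec w‖ + ‖evec p‖ := norm_sub_le _ _
        _ ≤ ‖evec w‖ + ζ * ‖evec w‖ := by linarith
        _ = (1 + ζ) * ‖evec w‖ := by ring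
    have htri : ‖evec w‖ ≤ ‖evec p‖ + ‖evec q‖ := by
      have hwe : w = p + q := by rw [hqd]; abel
      have hwe2 : evec w = evec p + evec q := by rw [hwe]; rfl
      rw [hwe2]
      exact norm_add_le _ _
    have heqn : ‖evec p‖ ^ 2 + ‖evec q‖ ^ 2 * (1 - lam) = ‖evec w‖ ^ 2 * (lam ^ 2 - lam) := by
      rw [norm_evec_sq, norm_evec_sq, norm_evec_sq]
      linear_combination hT + (lam - 1) * hdot
    have hcore := core ζ lam ‖evec w‖ ‖evec p‖ ‖evec q‖ hζ0 hss (norm_nonneg _) (norm_nonneg _)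
      hnp hnq htri heqn
    rw [hξdef]
    exact hcore
end

section
/- With the setup of the context (in particular √α L + M̄ Π_I invertible), let J^aug = [[J₁₁, J₁₂ᵀ],[J₁₂, 0]] with J₁₁ = blkdiag(M, αM) and J₁₂ = [[L, −M̄],[0, P_A M]], let Ŝ_A = (1/α)·Q·blkdiag(Ŝ, P_A M P_Aᵀ)·Qᵀ with Q = [[Iₙ, −M̄ Π_A M⁻¹ P_Aᵀ],[0, I_{|A|}]], and let 𝒫 = [[I, 0],[J₁₂ J₁₁⁻¹, I]] · blkdiag(J₁₁, −Ŝ_A) · [[I, J₁₁⁻¹ J₁₂ᵀ],[0, I]] be the indefinite preconditioner. Then: (a) every real number λ for which there exists a nonzero vector z with J^aug z = λ·(𝒫 z) satisfies λ = 1 or 1/2 ≤ λ ≤ ξ; (b) the kernel of J^aug − 𝒫 has dimension at least 3n + |A| − 2r, where r is the number of indices i with (Π_I)_{ii} = 1 (so r = n − |A|). -/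
set_option linter.unusedSectionVars false
set_option linter.unusedTactic false
set_option linter.unnecessarySeqFocus false
set_option maxHeartbeats 1000000
open Matrix

section Aux
variable {k k' k'' : Type*} [Fintype k] [Fintype k'] [Fintype k''] [DecidableEq k] [DecidableEq k'] [DecidableEq k'']

lemma aux_upper_inv (B : Matrix k k' ℝ) :
    fromBlocks 1 B 0 1 * fromBlocks 1 (-B) 0 1 = (1 : Matrix (k ⊕ k') (k ⊕ k') ℝ) := by
  rw [fromBlocks_multiply, ← fromBlocks_one]
  congr 1 <;> simp

lemma aux_lower_inv (B : Matrix k' k ℝ) :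
    fromBlocks 1 0 B 1 * fromBlocks 1 0 (-B) 1 = (1 : Matrix (k ⊕ k') (k ⊕ k') ℝ) := by
  rw [fromBlocks_multiply, ← fromBlocks_one]
  congr 1 <;> simp

lemma aux_mulVec_cancel {X : Matrix k' k ℝ} {Y : Matrix k k' ℝ} (h : Y * X = 1)
    {v w : k → ℝ} (hvw : X *ᵥ v = X *ᵥ w) : v = w := by
  have := congrArg (Y.mulVec) hvw
  rwa [mulVec_mulVec, mulVec_mulVec, h, one_mulVec, one_mulVec] at this

lemma aux_dot_mul_mul (X Y : Matrix k k' ℝ) (v : k' → ℝ) :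
    v ⬝ᵥ ((Xᵀ * Y) *ᵥ v) = (X *ᵥ v) ⬝ᵥ (Y *ᵥ v) := by
  rw [← mulVec_mulVec, dotProduct_mulVec, vecMul_transpose]

lemma aux_rank_add_le (X Y : Matrix k k' ℝ) : (X + Y).rank ≤ X.rank + Y.rank := by
  classical
  unfold Matrix.rank
  rw [mulVecLin_add]
  refine le_trans (Submodule.finrank_mono ?_) (Submodule.finrank_add_le_finrank_add_finrank _ _)
  rintro x ⟨v, rfl⟩
  exact Submodule.add_mem_sup ⟨v, rfl⟩ ⟨v, rfl⟩

lemma aux_dot_self_nonneg (v : k → ℝ) : 0 ≤ v ⬝ᵥ v :=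
  Finset.sum_nonneg fun _ _ => mul_self_nonneg _

lemma aux_dot_eq_sq (v : k → ℝ) :
    v ⬝ᵥ v = ‖(WithLp.equiv 2 (k → ℝ)).symm v‖ ^ 2 := by
  rw [EuclideanSpace.norm_eq]
  rw [Real.sq_sqrt (Finset.sum_nonneg fun i _ => sq_nonneg _)]
  simp [dotProduct, sq]

lemma aux_opnorm_mulVec (A : Matrix k k' ℝ) (v : k' → ℝ) :
    ‖(WithLp.equiv 2 (k → ℝ)).symm (A *ᵥ v)‖ ≤
      l2OpNorm A * ‖(WithLp.equiv 2 (k' → ℝ)).symm v‖ := by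
  have := (LinearMap.toContinuousLinearMap (Matrix.toEuclideanLin A)).le_opNorm
    ((WithLp.equiv 2 (k' → ℝ)).symm v)
  rw [LinearMap.coe_toContinuousLinearMap'] at this
  exact this

lemma aux_l2OpNorm_transpose (A : Matrix k k' ℝ) : l2OpNorm Aᵀ = l2OpNorm A := by
  have h := Matrix.l2_opNorm_conjTranspose (𝕜 := ℝ) A
  simpa [Matrix.l2_opNorm_def, l2OpNorm, Matrix.conjTranspose_eq_transpose_of_trivial] using h

lemma cancel_left (X Y : Matrix k k ℝ) (h : X * Y = 1) (Z : Matrix k k' ℝ) :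
    X * (Y * Z) = Z := by rw [← Matrix.mul_assoc, h, Matrix.one_mul]

lemma diag_mul_inv_self (f : k → ℝ) (hf : ∀ i, f i ≠ 0) :
    diagonal f * diagonal (fun i => (f i)⁻¹) = 1 := by
  rw [diagonal_mul_diagonal, ← diagonal_one]
  exact congrArg Matrix.diagonal (funext fun i => mul_inv_cancel₀ (hf i))

lemma diag_inv (f : k → ℝ) (hf : ∀ i, f i ≠ 0) :
    (diagonal f)⁻¹ = diagonal (fun i => (f i)⁻¹) :=
  inv_eq_right_inv (diag_mul_inv_self f hf)

lemma aux_card_ne_sum {β γ : Type*} [Fintype β] [Fintype γ] (w₁ : β → ℝ) (w₂ : γ → ℝ) :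
    Fintype.card {i : β ⊕ γ // Sum.elim w₁ w₂ i ≠ 0}
      = Fintype.card {i // w₁ i ≠ 0} + Fintype.card {i // w₂ i ≠ 0} := by
  classical
  rw [← Fintype.card_sum]
  refine Fintype.card_congr (Equiv.subtypeSum.trans (Equiv.sumCongr ?_ ?_))
  · exact Equiv.subtypeEquivRight fun a => by simp
  · exact Equiv.subtypeEquivRight fun a => by simp

lemma aux_card_ne_zero {β : Type*} [Fintype β] :
    Fintype.card {i : β // (fun _ : β => (0:ℝ)) i ≠ 0} = 0 := by
  haveI : IsEmpty {i : β // (fun _ : β => (0:ℝ)) i ≠ 0} := ⟨fun x => x.prop rfl⟩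
  exact Fintype.card_eq_zero

end Aux

section PA
variable {n : ℕ} {K : Type*} [Fintype K] [DecidableEq K] (A : Finset (Fin n))

lemma pa_mul (B : Matrix (Fin n) K ℝ) :
    ((1 : Matrix (Fin n) (Fin n) ℝ).submatrix (Subtype.val : {i // i ∈ A} → Fin n) id) * B
      = B.submatrix Subtype.val id := by
  ext s j
  simp [mul_apply, one_apply]

lemma mul_pat (B : Matrix K (Fin n) ℝ) :
    B * ((1 : Matrix (Fin n) (Fin n) ℝ).submatrix (Subtype.val : {i // i ∈ A} → Fin n) id)ᵀ
      = B.submatrix id Subtype.val := by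
  ext j s
  simp [mul_apply, one_apply]

lemma pat_pa :
    ((1 : Matrix (Fin n) (Fin n) ℝ).submatrix (Subtype.val : {i // i ∈ A} → Fin n) id)ᵀ *
      ((1 : Matrix (Fin n) (Fin n) ℝ).submatrix (Subtype.val : {i // i ∈ A} → Fin n) id)
      = diagonal (fun i => if i ∈ A then 1 else 0) := by
  ext i j
  rw [mul_apply]
  simp only [transpose_apply, submatrix_apply, id_eq, one_apply]
  by_cases hi : i ∈ A
  · rw [Finset.sum_eq_single (⟨i, hi⟩ : {i // i ∈ A})]
    · simp [diagonal, hi, eq_comm]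
    · intro s _ hs
      have : (s : Fin n) ≠ i := fun hh => hs (Subtype.ext hh)
      simp [this]
    · simp
  · rw [Finset.sum_eq_zero]
    · rcases eq_or_ne i j with rfl | hij
      · simp [diagonal, hi]
      · simp [diagonal_apply_ne _ hij]
    · intro s _
      have : (s : Fin n) ≠ i := fun hh => hi (hh ▸ s.prop)
      simp [this]

lemma pa_diag_pat (dd : Fin n → ℝ) :
    ((1 : Matrix (Fin n) (Fin n) ℝ).submatrix (Subtype.val : {i // i ∈ A} → Fin n) id) *
      diagonal dd *
      ((1 : Matrix (Fin n) (Fin n) ℝ).submatrix (Subtype.val : {i // i ∈ A} → Fin n) id)ᵀ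
      = diagonal (fun s : {i // i ∈ A} => dd s.val) := by
  rw [Matrix.mul_assoc, mul_pat, pa_mul]
  ext s t
  by_cases h : s = t
  · subst h; simp
  · have : s.val ≠ t.val := fun hh => h (Subtype.ext hh)
    simp [diagonal_apply_ne _ h, this, diagonal_apply_ne _ this]

lemma piA_pat :
    (diagonal (fun i => if i ∈ A then (1:ℝ) else 0)) *
      ((1 : Matrix (Fin n) (Fin n) ℝ).submatrix (Subtype.val : {i // i ∈ A} → Fin n) id)ᵀ
      = ((1 : Matrix (Fin n) (Fin n) ℝ).submatrix (Subtype.val : {i // i ∈ A} → Fin n) id)ᵀ := by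
  rw [mul_pat]
  ext i s
  by_cases h : i = s.val
  · subst h; simp [one_apply, s.prop]
  · simp [one_apply, h, Ne.symm h, diagonal_apply_ne _ h]

end PA

/-- spectrum of the augmented system preconditioned by the indefinite
preconditioner: every eigenvalue is 1 or lies in [1/2, ξ], and the kernel of
J^aug − 𝒫 has dimension at least 3n + |A| − 2r. -/
theorem stmt_15 (n : ℕ) (hn : 1 ≤ n)
    (L Mb M : Matrix (Fin n) (Fin n) ℝ)
    (hM : M.IsDiag) (hMpos : ∀ i, 0 < M i i)
    (α : ℝ) (hα : 0 < α) (A : Finset (Fin n))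
    (hinv : IsUnit (Real.sqrt α • L +
      Mb * Matrix.diagonal (fun i => if i ∈ A then (0 : ℝ) else 1)).det) :
    let PiI : Matrix (Fin n) (Fin n) ℝ :=
      Matrix.diagonal (fun i => if i ∈ A then 0 else 1)
    let PiA : Matrix (Fin n) (Fin n) ℝ :=
      Matrix.diagonal (fun i => if i ∈ A then 1 else 0)
    let PA : Matrix {i // i ∈ A} (Fin n) ℝ :=
      (1 : Matrix (Fin n) (Fin n) ℝ).submatrix Subtype.val id
    let Sh : Matrix (Fin n) (Fin n) ℝ :=
      (Real.sqrt α • L + Mb * PiI) * M⁻¹ * (Real.sqrt α • L + Mb * PiI)ᵀ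
    let ζ : ℝ := l2OpNorm (Matrix.diagonal (fun i => Real.sqrt (M i i)) *
      (Real.sqrt α • L + Mb * PiI)⁻¹ * (Real.sqrt α • L) *
      Matrix.diagonal (fun i => (Real.sqrt (M i i))⁻¹))
    let ξ : ℝ := ζ ^ 2 + (1 + ζ) ^ 2
    let J11 : Matrix (Fin n ⊕ Fin n) (Fin n ⊕ Fin n) ℝ :=
      Matrix.fromBlocks M 0 0 (α • M)
    let J12 : Matrix (Fin n ⊕ {i // i ∈ A}) (Fin n ⊕ Fin n) ℝ :=
      Matrix.fromBlocks L (-Mb) 0 (PA * M)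
    let Jaug := Matrix.fromBlocks J11 J12ᵀ J12 0
    let Q : Matrix (Fin n ⊕ {i // i ∈ A}) (Fin n ⊕ {i // i ∈ A}) ℝ :=
      Matrix.fromBlocks 1 (-(Mb * PiA * M⁻¹ * PAᵀ)) 0 1
    let ShA := α⁻¹ • (Q * Matrix.fromBlocks Sh 0 0 (PA * M * PAᵀ) * Qᵀ)
    let P := Matrix.fromBlocks 1 0 (J12 * J11⁻¹) 1 *
      Matrix.fromBlocks J11 0 0 (-ShA) *
      Matrix.fromBlocks 1 (J11⁻¹ * J12ᵀ) 0 1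
    (∀ (lam : ℝ) (z : (Fin n ⊕ Fin n) ⊕ (Fin n ⊕ {i // i ∈ A}) → ℝ), z ≠ 0 →
        Jaug.mulVec z = lam • P.mulVec z →
        lam = 1 ∨ (1 / 2 ≤ lam ∧ lam ≤ ξ)) ∧
      3 * n + A.card - 2 * (Finset.univ.filter (fun i => PiI i i = 1)).card ≤
        Module.finrank ℝ (LinearMap.ker (Jaug - P).mulVecLin) := by
  intro PiI PiA PA Sh ζ ξ J11 J12 Jaug Q ShA P
  classical
  -- ### basic diagonal facts
  have hMd : M = diagonal (fun i => M i i) := hM.diagonal_diag.symm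
  have hdne : ∀ i, M i i ≠ 0 := fun i => (hMpos i).ne'
  have hMT : Mᵀ = M := by
    conv_lhs => rw [hMd, diagonal_transpose]
    exact hMd.symm
  have hMinv : M⁻¹ = diagonal (fun i => (M i i)⁻¹) := by
    conv_lhs => rw [hMd]
    exact diag_inv _ hdne
  have hMMi : M * M⁻¹ = 1 := by
    rw [hMinv]
    nth_rewrite 1 [hMd]
    exact diag_mul_inv_self _ hdne
  have hMiM : M⁻¹ * M = 1 := mul_eq_one_comm.mp hMMi
  have hMiT : M⁻¹ᵀ = M⁻¹ := by rw [hMinv, diagonal_transpose]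
  -- square root matrix
  set R : Matrix (Fin n) (Fin n) ℝ := diagonal (fun i => Real.sqrt (M i i)) with hR_def
  have hsqpos : ∀ i, 0 < Real.sqrt (M i i) := fun i => Real.sqrt_pos.2 (hMpos i)
  have hsqne : ∀ i, Real.sqrt (M i i) ≠ 0 := fun i => (hsqpos i).ne'
  have hRT : Rᵀ = R := diagonal_transpose _
  have hRinv : R⁻¹ = diagonal (fun i => (Real.sqrt (M i i))⁻¹) := diag_inv _ hsqne
  have hRRi : R * R⁻¹ = 1 := by
    rw [hRinv]
    exact diag_mul_inv_self _ hsqne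
  have hRiR : R⁻¹ * R = 1 := mul_eq_one_comm.mp hRRi
  have hRiT : R⁻¹ᵀ = R⁻¹ := by rw [hRinv, diagonal_transpose]
  have hRiRi : R⁻¹ * R⁻¹ = M⁻¹ := by
    rw [hRinv, diagonal_mul_diagonal, hMinv]
    refine congrArg Matrix.diagonal (funext fun i => ?_)
    rw [← mul_inv, Real.mul_self_sqrt (hMpos i).le]
  -- a, b, K
  set a : Matrix (Fin n) (Fin n) ℝ := Real.sqrt α • L with ha_def
  set b : Matrix (Fin n) (Fin n) ℝ := Mb * PiI with hb_def
  set K : Matrix (Fin n) (Fin n) ℝ := a + b with hK_def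
  have hKdet : IsUnit K.det := hinv
  have hKKi : K * K⁻¹ = 1 := mul_nonsing_inv _ hKdet
  have hKiK : K⁻¹ * K = 1 := nonsing_inv_mul _ hKdet
  have hKtinv : (Kᵀ)⁻¹ = (K⁻¹)ᵀ := (transpose_nonsing_inv K).symm
  have hKtiKt : (K⁻¹)ᵀ * Kᵀ = 1 := by
    rw [← transpose_mul, hKKi, transpose_one]
  have hKtKti : Kᵀ * (K⁻¹)ᵀ = 1 := by
    rw [← transpose_mul, hKiK, transpose_one]
  have hShK : Sh = K * M⁻¹ * Kᵀ := rfl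
  have hPiIT : PiIᵀ = PiI := diagonal_transpose _
  have hPiAT : PiAᵀ = PiA := diagonal_transpose _
  have hbT : bᵀ = PiI * Mbᵀ := by rw [hb_def, transpose_mul, hPiIT]
  -- diagonal products
  have hdI : PiI * M⁻¹ * PiI = diagonal (fun i => if i ∈ A then 0 else (M i i)⁻¹) := by
    rw [hMinv]
    show diagonal _ * diagonal _ * diagonal _ = _
    rw [diagonal_mul_diagonal, diagonal_mul_diagonal]
    refine congrArg Matrix.diagonal (funext fun i => ?_)
    by_cases h : i ∈ A <;> simp [h]
  have hdA : PiA * M⁻¹ * PiA = diagonal (fun i => if i ∈ A then (M i i)⁻¹ else 0) := by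
    rw [hMinv]
    show diagonal _ * diagonal _ * diagonal _ = _
    rw [diagonal_mul_diagonal, diagonal_mul_diagonal]
    refine congrArg Matrix.diagonal (funext fun i => ?_)
    by_cases h : i ∈ A <;> simp [h]
  have hdIdA : diagonal (fun i => if i ∈ A then 0 else (M i i)⁻¹)
      + diagonal (fun i => if i ∈ A then (M i i)⁻¹ else 0) = M⁻¹ := by
    rw [diagonal_add, hMinv]
    refine congrArg Matrix.diagonal (funext fun i => ?_)
    by_cases h : i ∈ A <;> simp [h]
  -- ### J11 inverse
  have hJ11blk : J11 * fromBlocks M⁻¹ 0 0 (α⁻¹ • M⁻¹) = 1 := by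
    show fromBlocks M 0 0 (α • M) * _ = 1
    rw [fromBlocks_multiply, ← fromBlocks_one, fromBlocks_inj]
    refine ⟨by simpa using hMMi, by simp, by simp, ?_⟩
    rw [Matrix.zero_mul, zero_add, smul_mul_smul_comm, hMMi, mul_inv_cancel₀ hα.ne', one_smul]
  have hJ11inv : J11⁻¹ = fromBlocks M⁻¹ 0 0 (α⁻¹ • M⁻¹) := inv_eq_right_inv hJ11blk
  have hJ11Ji : J11 * J11⁻¹ = 1 := by rw [hJ11inv]; exact hJ11blk
  have hJiJ11 : J11⁻¹ * J11 = 1 := mul_eq_one_comm.mp hJ11Ji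
  -- ### structural factorizations
  set S : Matrix (Fin n ⊕ {i // i ∈ A}) (Fin n ⊕ {i // i ∈ A}) ℝ := J12 * J11⁻¹ * J12ᵀ with hS_def
  set U : Matrix ((Fin n ⊕ Fin n) ⊕ (Fin n ⊕ {i // i ∈ A})) ((Fin n ⊕ Fin n) ⊕ (Fin n ⊕ {i // i ∈ A})) ℝ := fromBlocks (1 : Matrix (Fin n ⊕ Fin n) (Fin n ⊕ Fin n) ℝ) 0 (J12 * J11⁻¹) 1 with hU_def
  set V : Matrix ((Fin n ⊕ Fin n) ⊕ (Fin n ⊕ {i // i ∈ A})) ((Fin n ⊕ Fin n) ⊕ (Fin n ⊕ {i // i ∈ A})) ℝ := fromBlocks (1 : Matrix (Fin n ⊕ Fin n) (Fin n ⊕ Fin n) ℝ) (J11⁻¹ * J12ᵀ) 0 1 with hV_def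
  set Ui : Matrix ((Fin n ⊕ Fin n) ⊕ (Fin n ⊕ {i // i ∈ A})) ((Fin n ⊕ Fin n) ⊕ (Fin n ⊕ {i // i ∈ A})) ℝ := fromBlocks (1 : Matrix (Fin n ⊕ Fin n) (Fin n ⊕ Fin n) ℝ) 0 (-(J12 * J11⁻¹)) 1 with hUi_def
  set Vi : Matrix ((Fin n ⊕ Fin n) ⊕ (Fin n ⊕ {i // i ∈ A})) ((Fin n ⊕ Fin n) ⊕ (Fin n ⊕ {i // i ∈ A})) ℝ := fromBlocks (1 : Matrix (Fin n ⊕ Fin n) (Fin n ⊕ Fin n) ℝ) (-(J11⁻¹ * J12ᵀ)) 0 1 with hVi_def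
  have hUUi : U * Ui = 1 := aux_lower_inv _
  have hUiU : Ui * U = 1 := by
    have := aux_lower_inv (-(J12 * J11⁻¹))
    rwa [neg_neg] at this
  have hVVi : V * Vi = 1 := aux_upper_inv _
  have hViV : Vi * V = 1 := by
    have := aux_upper_inv (-(J11⁻¹ * J12ᵀ))
    rwa [neg_neg] at this
  set DJ : Matrix ((Fin n ⊕ Fin n) ⊕ (Fin n ⊕ {i // i ∈ A})) ((Fin n ⊕ Fin n) ⊕ (Fin n ⊕ {i // i ∈ A})) ℝ := fromBlocks J11 0 0 (-S) with hDJ_def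
  set DP : Matrix ((Fin n ⊕ Fin n) ⊕ (Fin n ⊕ {i // i ∈ A})) ((Fin n ⊕ Fin n) ⊕ (Fin n ⊕ {i // i ∈ A})) ℝ := fromBlocks J11 0 0 (-ShA) with hDP_def
  have hPfac : P = U * DP * V := rfl
  have hJfac : Jaug = U * DJ * V := by
    show fromBlocks J11 J12ᵀ J12 0 = _
    have e : J12 * J11⁻¹ * J11 = J12 := by rw [Matrix.mul_assoc, hJiJ11, Matrix.mul_one]
    rw [hU_def, hDJ_def, hV_def, fromBlocks_multiply, fromBlocks_multiply, fromBlocks_inj]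
    refine ⟨by simp, ?_, ?_, ?_⟩
    · simp only [Matrix.one_mul, Matrix.zero_mul, Matrix.mul_zero, add_zero, zero_add,
        Matrix.mul_one]
      rw [← Matrix.mul_assoc, hJ11Ji, Matrix.one_mul]
    · simp only [Matrix.one_mul, Matrix.zero_mul, Matrix.mul_zero, add_zero, zero_add,
        Matrix.mul_one]
      exact e.symm
    · simp only [Matrix.one_mul, Matrix.zero_mul, Matrix.mul_zero, add_zero, zero_add,
        Matrix.mul_one]
      rw [e, ← Matrix.mul_assoc]
      simp [hS_def]
  -- ### the key block identity : ShA = S + F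
  set G : Matrix (Fin n) (Fin n) ℝ := α⁻¹ • (a * M⁻¹ * bᵀ + b * M⁻¹ * aᵀ) with hG_def
  set F : Matrix (Fin n ⊕ {i // i ∈ A}) (Fin n ⊕ {i // i ∈ A}) ℝ := fromBlocks G 0 0 0 with hF_def
  set C : Matrix (Fin n) {i // i ∈ A} ℝ := Mb * PiA * M⁻¹ * PAᵀ with hC_def
  set S2 : Matrix {i // i ∈ A} {i // i ∈ A} ℝ := PA * M * PAᵀ with hS2_def
  have hS2diag : S2 = diagonal (fun s : {i // i ∈ A} => M s.val s.val) := by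
    rw [hS2_def]
    conv_lhs => rw [hMd]
    exact pa_diag_pat A _
  have hS2T : S2ᵀ = S2 := by rw [hS2diag, diagonal_transpose]
  have hPP : ∀ {t : Type} [Fintype t] (X : Matrix (Fin n) t ℝ), PAᵀ * (PA * X) = PiA * X := by
    intro t _ X
    rw [← Matrix.mul_assoc, pat_pa]
  have hDD : PiA * (M⁻¹ * (PiA * M)) = PiA := by
    rw [hMinv]
    show diagonal (fun i => if i ∈ A then (1:ℝ) else 0) * (diagonal (fun i => (M i i)⁻¹) *
        (diagonal (fun i => if i ∈ A then (1:ℝ) else 0) * M))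
      = diagonal (fun i => if i ∈ A then (1:ℝ) else 0)
    ext i j
    rw [diagonal_mul, diagonal_mul, diagonal_mul]
    rcases eq_or_ne i j with rfl | hij
    · by_cases h : i ∈ A <;> simp [h, inv_mul_cancel₀ (hdne i)]
    · simp [hM hij, diagonal_apply_ne _ hij]
  have hkey : PiA * (M⁻¹ * (PiA * (M * PAᵀ))) = PAᵀ := by
    calc PiA * (M⁻¹ * (PiA * (M * PAᵀ))) = PiA * (M⁻¹ * (PiA * M)) * PAᵀ := by
          simp only [Matrix.mul_assoc]
      _ = PiA * PAᵀ := by rw [hDD]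
      _ = PAᵀ := piA_pat A
  have hE1 : C * S2 = Mb * PAᵀ := by
    rw [hC_def, hS2_def]
    simp only [Matrix.mul_assoc]
    rw [hPP, hkey]
  have hE2 : S2 * Cᵀ = PA * Mbᵀ := by
    have h2 := congrArg Matrix.transpose hE1
    rw [transpose_mul, hS2T] at h2
    rw [h2, transpose_mul, transpose_transpose]
  have hCT : Cᵀ = PA * (M⁻¹ * (PiA * Mbᵀ)) := by
    rw [hC_def]
    simp only [transpose_mul, transpose_transpose, hMiT, hPiAT, Matrix.mul_assoc]
  have hE3 : C * S2 * Cᵀ = Mb * diagonal (fun i => if i ∈ A then (M i i)⁻¹ else 0) * Mbᵀ := by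
    rw [hE1, hCT]
    simp only [Matrix.mul_assoc]
    rw [hPP]
    rw [show PiA * (M⁻¹ * (PiA * Mbᵀ)) = diagonal (fun i => if i ∈ A then (M i i)⁻¹ else 0) * Mbᵀ by
      rw [← Matrix.mul_assoc, ← Matrix.mul_assoc, hdA]]
  have hEsh : Sh = α • (L * M⁻¹ * Lᵀ) + (a * M⁻¹ * bᵀ + b * M⁻¹ * aᵀ)
      + Mb * diagonal (fun i => if i ∈ A then 0 else (M i i)⁻¹) * Mbᵀ := by
    have haa : a * M⁻¹ * aᵀ = α • (L * M⁻¹ * Lᵀ) := by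
      rw [ha_def, transpose_smul]
      rw [smul_mul_assoc, smul_mul_assoc, mul_smul_comm, smul_smul,
        Real.mul_self_sqrt hα.le]
    have hbb : b * M⁻¹ * bᵀ = Mb * diagonal (fun i => if i ∈ A then 0 else (M i i)⁻¹) * Mbᵀ := by
      rw [hbT, hb_def]
      simp only [Matrix.mul_assoc]
      rw [show PiI * (M⁻¹ * (PiI * Mbᵀ)) = diagonal (fun i => if i ∈ A then 0 else (M i i)⁻¹) * Mbᵀ by
        rw [← Matrix.mul_assoc, ← Matrix.mul_assoc, hdI]]
    have expand : (a + b) * M⁻¹ * (a + b)ᵀ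
        = a * M⁻¹ * aᵀ + a * M⁻¹ * bᵀ + b * M⁻¹ * aᵀ + b * M⁻¹ * bᵀ := by
      rw [transpose_add]
      noncomm_ring
    rw [hShK, hK_def, expand, haa, hbb]
    abel
  have hSblocks : S = fromBlocks (L * M⁻¹ * Lᵀ + α⁻¹ • (Mb * M⁻¹ * Mbᵀ))
      (-(α⁻¹ • (Mb * PAᵀ))) (-(α⁻¹ • (PA * Mbᵀ))) (α⁻¹ • S2) := by
    have hJ12T : J12ᵀ = fromBlocks Lᵀ 0 (-Mbᵀ) (M * PAᵀ) := by
      show (fromBlocks L (-Mb) 0 (PA * M))ᵀ = _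
      rw [fromBlocks_transpose, fromBlocks_inj]
      exact ⟨rfl, by simp, by simp, by rw [transpose_mul, hMT]⟩
    rw [hS_def, hJ11inv, hJ12T, fromBlocks_multiply, fromBlocks_multiply, fromBlocks_inj]
    refine ⟨?_, ?_, ?_, ?_⟩
    · simp only [Matrix.zero_mul, Matrix.mul_zero, add_zero, zero_add, Matrix.neg_mul,
        Matrix.mul_neg, neg_neg, mul_smul_comm, smul_mul_assoc]
    · simp [Matrix.neg_mul, Matrix.mul_neg, neg_neg, mul_smul_comm, smul_mul_assoc,
        Matrix.mul_assoc, cancel_left M⁻¹ M hMiM, cancel_left M M⁻¹ hMMi]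
    · simp [Matrix.neg_mul, Matrix.mul_neg, neg_neg, mul_smul_comm, smul_mul_assoc,
        Matrix.mul_assoc, cancel_left M⁻¹ M hMiM, cancel_left M M⁻¹ hMMi]
    · simp [mul_smul_comm, smul_mul_assoc, Matrix.mul_assoc, cancel_left M⁻¹ M hMiM,
        cancel_left M M⁻¹ hMMi, hS2_def]
  have hI4 : ShA = S + F := by
    have hQT : Qᵀ = fromBlocks 1 0 (-Cᵀ) 1 := by
      show (fromBlocks 1 (-C) 0 1)ᵀ = _
      rw [fromBlocks_transpose]
      simp
    have hshaeq : ShA = α⁻¹ • (Q * fromBlocks Sh 0 0 S2 * Qᵀ) := rfl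
    have step1 : Q * fromBlocks Sh 0 0 S2 = fromBlocks Sh (-(C * S2)) 0 S2 := by
      show fromBlocks 1 (-C) 0 1 * _ = _
      rw [fromBlocks_multiply, fromBlocks_inj]
      exact ⟨by simp, by simp [Matrix.neg_mul], by simp, by simp⟩
    have step2 : fromBlocks Sh (-(C * S2)) 0 S2 * Qᵀ
        = fromBlocks (Sh + C * S2 * Cᵀ) (-(C * S2)) (-(S2 * Cᵀ)) S2 := by
      rw [hQT, fromBlocks_multiply, fromBlocks_inj]
      refine ⟨by simp [Matrix.neg_mul, Matrix.mul_neg], by simp, by simp [Matrix.mul_neg], by simp⟩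
    have hsum : Sh + C * S2 * Cᵀ = α • (L * M⁻¹ * Lᵀ) + (a * M⁻¹ * bᵀ + b * M⁻¹ * aᵀ)
        + Mb * M⁻¹ * Mbᵀ := by
      have hMbdd : Mb * diagonal (fun i => if i ∈ A then 0 else (M i i)⁻¹) * Mbᵀ
          + Mb * diagonal (fun i => if i ∈ A then (M i i)⁻¹ else 0) * Mbᵀ
          = Mb * M⁻¹ * Mbᵀ := by
        rw [← Matrix.add_mul, ← Matrix.mul_add, hdIdA]
      rw [hEsh, hE3, ← hMbdd]
      abel
    rw [hshaeq, step1, step2, hSblocks, hF_def, fromBlocks_add, fromBlocks_smul, fromBlocks_inj]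
    refine ⟨?_, by rw [hE1]; simp, by rw [hE2]; simp, by simp⟩
    rw [hsum, hG_def]
    simp only [smul_add, smul_smul, inv_mul_cancel₀ hα.ne', one_smul]
    abel
  -- ### Q inverse
  set Qi : Matrix (Fin n ⊕ {i // i ∈ A}) (Fin n ⊕ {i // i ∈ A}) ℝ := fromBlocks 1 C 0 1 with hQi_def
  have hQQi : Q * Qi = 1 := by
    have := aux_upper_inv (-C)
    rwa [neg_neg] at this
  have hQiQ : Qi * Q = 1 := mul_eq_one_comm.mp hQQi
  have hQiF : Qi * F = F := by
    rw [hQi_def, hF_def, fromBlocks_multiply]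
    congr 1 <;> simp
  have hFQit : F * Qiᵀ = F := by
    rw [hQi_def, hF_def, fromBlocks_transpose, fromBlocks_multiply]
    congr 1 <;> simp
  -- decomposition of G for the rank bound
  have hGdecomp : G = (α⁻¹ • (a * M⁻¹)) * PiI * Mbᵀ + (α⁻¹ • Mb) * PiI * (M⁻¹ * aᵀ) := by
    rw [hG_def, hbT, hb_def]
    simp only [smul_add, smul_mul_assoc, Matrix.mul_assoc]
  constructor
  · -- ### Part (a) : the eigenvalue bounds
    intro lam z hz heq
    by_cases hlam : lam = 1
    · exact Or.inl hlam
    right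
    have heq2 : DJ *ᵥ (V *ᵥ z) = lam • (DP *ᵥ (V *ᵥ z)) := by
      have h0 : (U * DJ * V) *ᵥ z = lam • ((U * DP * V) *ᵥ z) := by
        rw [← hJfac, ← hPfac]; exact heq
      rw [← mulVec_mulVec, ← mulVec_mulVec, ← mulVec_mulVec, ← mulVec_mulVec,
        ← mulVec_smul] at h0
      exact aux_mulVec_cancel hUiU h0
    set y : (Fin n ⊕ Fin n) ⊕ (Fin n ⊕ {i // i ∈ A}) → ℝ := V *ᵥ z with hy_def
    have hyne : y ≠ 0 := by
      intro h0
      apply hz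
      refine aux_mulVec_cancel hViV ?_
      rw [mulVec_zero, ← hy_def, h0]
    rw [hDJ_def, hDP_def, fromBlocks_mulVec J11 0 0 (-S) y,
      fromBlocks_mulVec J11 0 0 (-ShA) y] at heq2
    simp only [Matrix.zero_mulVec, add_zero, zero_add] at heq2
    have htop : J11 *ᵥ (y ∘ Sum.inl) = lam • (J11 *ᵥ (y ∘ Sum.inl)) := by
      funext i
      simpa only [Sum.elim_inl, Pi.smul_apply, smul_eq_mul] using congrFun heq2 (Sum.inl i)
    have hbot : S *ᵥ (y ∘ Sum.inr) = lam • (ShA *ᵥ (y ∘ Sum.inr)) := by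
      have h : (-S) *ᵥ (y ∘ Sum.inr) = lam • ((-ShA) *ᵥ (y ∘ Sum.inr)) := by
        funext i
        simpa only [Sum.elim_inr, Pi.smul_apply, smul_eq_mul] using congrFun heq2 (Sum.inr i)
      rw [Matrix.neg_mulVec, Matrix.neg_mulVec, smul_neg, neg_inj] at h
      exact h
    have hy1 : y ∘ Sum.inl = 0 := by
      have h1 : (1 - lam) • (J11 *ᵥ (y ∘ Sum.inl)) = 0 := by
        rw [sub_smul, one_smul, ← htop, sub_self]
      have h2 : J11 *ᵥ (y ∘ Sum.inl) = 0 := by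
        rcases smul_eq_zero.mp h1 with h | h
        · exact absurd (sub_eq_zero.mp h).symm hlam
        · exact h
      refine aux_mulVec_cancel hJiJ11 ?_
      rw [mulVec_zero, h2]
    set y2 : Fin n ⊕ {i // i ∈ A} → ℝ := y ∘ Sum.inr with hy2_def
    have hy2ne : y2 ≠ 0 := by
      intro h0
      apply hyne
      funext x
      cases x with
      | inl i => exact congrFun hy1 i
      | inr i => exact congrFun h0 i
    have hkey1 : (1 - lam) • (ShA *ᵥ y2) = F *ᵥ y2 := by
      have hexp : ShA *ᵥ y2 = S *ᵥ y2 + F *ᵥ y2 := by rw [hI4, Matrix.add_mulVec]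
      funext i
      have e1 := congrFun hbot i
      have e2 := congrFun hexp i
      simp only [Pi.smul_apply, Pi.add_apply, smul_eq_mul] at e1 e2 ⊢
      linear_combination e1 + e2
    set w : Fin n ⊕ {i // i ∈ A} → ℝ := Qᵀ *ᵥ y2 with hw_def
    have hy2w : y2 = Qiᵀ *ᵥ w := by
      rw [hw_def, mulVec_mulVec, ← transpose_mul, hQQi, transpose_one, one_mulVec]
    have hkey2 : (1 - lam) • (α⁻¹ • ((fromBlocks Sh 0 0 S2) *ᵥ w)) = F *ᵥ w := by
      have h0 := congrArg (Qi.mulVec) hkey1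
      rw [mulVec_smul] at h0
      have hL : Qi *ᵥ (ShA *ᵥ y2) = α⁻¹ • ((fromBlocks Sh 0 0 S2) *ᵥ w) := by
        have hsha : ShA *ᵥ y2 = α⁻¹ • ((Q * fromBlocks Sh 0 0 S2 * Qᵀ) *ᵥ y2) :=
          Matrix.smul_mulVec _ _ _
        rw [hsha, mulVec_smul, ← mulVec_mulVec, ← mulVec_mulVec, ← hw_def,
          mulVec_mulVec, hQiQ, one_mulVec]
      have hR : Qi *ᵥ (F *ᵥ y2) = F *ᵥ w := by
        rw [mulVec_mulVec, hQiF, hy2w, mulVec_mulVec, hFQit]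
      rw [hL, hR] at h0
      exact h0
    rw [hF_def, fromBlocks_mulVec Sh 0 0 S2 w, fromBlocks_mulVec G 0 0 0 w] at hkey2
    simp only [Matrix.zero_mulVec, add_zero, zero_add] at hkey2
    have htop2 : (1 - lam) • (α⁻¹ • (Sh *ᵥ (w ∘ Sum.inl))) = G *ᵥ (w ∘ Sum.inl) := by
      funext i
      simpa only [Sum.elim_inl, Pi.smul_apply, smul_eq_mul] using congrFun hkey2 (Sum.inl i)
    have hbot2 : (1 - lam) • (α⁻¹ • (S2 *ᵥ (w ∘ Sum.inr))) = 0 := by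
      funext i
      simpa only [Sum.elim_inr, Pi.smul_apply, smul_eq_mul, Pi.zero_apply]
        using congrFun hkey2 (Sum.inr i)
    have hw2 : w ∘ Sum.inr = 0 := by
      have h2 : S2 *ᵥ (w ∘ Sum.inr) = 0 := by
        rcases smul_eq_zero.mp hbot2 with h | h
        · exact absurd (sub_eq_zero.mp h).symm hlam
        · rcases smul_eq_zero.mp h with h' | h'
          · exact absurd h' (inv_ne_zero hα.ne')
          · exact h'
      have hS2i : diagonal (fun s : {i // i ∈ A} => (M s.val s.val)⁻¹) * S2 = 1 := by
        rw [hS2diag]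
        exact mul_eq_one_comm.mp (diag_mul_inv_self _ (fun s => hdne s.val))
      refine aux_mulVec_cancel hS2i ?_
      rw [mulVec_zero, h2]
    set w1 : Fin n → ℝ := w ∘ Sum.inl with hw1_def
    have hw1ne : w1 ≠ 0 := by
      intro h0
      apply hy2ne
      rw [hy2w]
      have : w = 0 := by
        funext x
        cases x with
        | inl i => exact congrFun h0 i
        | inr i => exact congrFun hw2 i
      rw [this, mulVec_zero]
    have hscal : (1 - lam) * (α⁻¹ * (w1 ⬝ᵥ (Sh *ᵥ w1))) = w1 ⬝ᵥ (G *ᵥ w1) := by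
      have h0 := congrArg (fun v => w1 ⬝ᵥ v) htop2
      simpa [dotProduct_smul, smul_eq_mul, mul_assoc] using h0
    -- the vectors p, q, u
    set p : Fin n → ℝ := (R⁻¹ * aᵀ) *ᵥ w1 with hp_def
    set q : Fin n → ℝ := (R⁻¹ * bᵀ) *ᵥ w1 with hq_def
    set u : Fin n → ℝ := (R⁻¹ * Kᵀ) *ᵥ w1 with hu_def
    have hupq : u = p + q := by
      rw [hu_def, hp_def, hq_def, hK_def, transpose_add, Matrix.mul_add, Matrix.add_mulVec]
    have hdotMM : ∀ X Y : Matrix (Fin n) (Fin n) ℝ,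
        X * M⁻¹ * Yᵀ = (R⁻¹ * Xᵀ)ᵀ * (R⁻¹ * Yᵀ) := by
      intro X Y
      rw [transpose_mul, hRiT, transpose_transpose, ← hRiRi]
      simp only [Matrix.mul_assoc]
    have hSh_dot : w1 ⬝ᵥ (Sh *ᵥ w1) = u ⬝ᵥ u := by
      have hfact : Sh = (R⁻¹ * Kᵀ)ᵀ * (R⁻¹ * Kᵀ) := by rw [hShK, hdotMM K K]
      rw [hfact, aux_dot_mul_mul]
    have hG_dot : w1 ⬝ᵥ (G *ᵥ w1) = α⁻¹ * (2 * (p ⬝ᵥ q)) := by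
      rw [hG_def, Matrix.smul_mulVec, dotProduct_smul, smul_eq_mul,
        Matrix.add_mulVec, dotProduct_add, hdotMM a b, hdotMM b a,
        aux_dot_mul_mul, aux_dot_mul_mul,
        dotProduct_comm ((R⁻¹ * bᵀ) *ᵥ w1) ((R⁻¹ * aᵀ) *ᵥ w1)]
      ring_nf
      rfl
    have hune : u ≠ 0 := by
      intro h0
      apply hw1ne
      have hYX : (Kᵀ)⁻¹ * R * (R⁻¹ * Kᵀ) = 1 := by
        rw [Matrix.mul_assoc, cancel_left R R⁻¹ hRRi Kᵀ, hKtinv, hKtiKt]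
      refine aux_mulVec_cancel hYX ?_
      rw [mulVec_zero, ← hu_def, h0]
    have hupos : 0 < u ⬝ᵥ u :=
      (aux_dot_self_nonneg u).lt_of_ne
        (fun h => hune (dotProduct_self_eq_zero.mp h.symm))
    have e2 : (1 - lam) * (u ⬝ᵥ u) = 2 * (p ⬝ᵥ q) := by
      have e : (1 - lam) * (α⁻¹ * (u ⬝ᵥ u)) = α⁻¹ * (2 * (p ⬝ᵥ q)) := by
        rw [← hSh_dot, hscal, hG_dot]
      rw [show (1 - lam) * (α⁻¹ * (u ⬝ᵥ u)) = α⁻¹ * ((1 - lam) * (u ⬝ᵥ u)) from by ring] at e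
      exact mul_left_cancel₀ (inv_ne_zero hα.ne') e
    have hexp : u ⬝ᵥ u = p ⬝ᵥ p + 2 * (p ⬝ᵥ q) + q ⬝ᵥ q := by
      rw [hupq]
      simp only [dotProduct_add, add_dotProduct, dotProduct_comm q p]
      ring
    have hmain : lam * (u ⬝ᵥ u) = p ⬝ᵥ p + q ⬝ᵥ q := by linear_combination hexp - e2
    have hpm : (p - q) ⬝ᵥ (p - q) = p ⬝ᵥ p - 2 * (p ⬝ᵥ q) + q ⬝ᵥ q := by
      simp only [dotProduct_sub, sub_dotProduct, dotProduct_comm q p]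
      ring
    have hsq := aux_dot_self_nonneg (p - q)
    constructor
    · -- lower bound
      rw [hpm] at hsq
      nlinarith [hmain, hexp, hupos]
    · -- upper bound
      have hzeta : ζ = l2OpNorm (R * K⁻¹ * a * R⁻¹) := by rw [hRinv]
      have hNt : p = (R * K⁻¹ * a * R⁻¹)ᵀ *ᵥ u := by
        have hprod : (R * K⁻¹ * a * R⁻¹)ᵀ * (R⁻¹ * Kᵀ) = R⁻¹ * aᵀ := by
          simp only [transpose_mul, hRiT, hRT, Matrix.mul_assoc]
          rw [cancel_left R R⁻¹ hRRi Kᵀ, hKtiKt, Matrix.mul_one]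
        calc p = (R⁻¹ * aᵀ) *ᵥ w1 := rfl
          _ = ((R * K⁻¹ * a * R⁻¹)ᵀ * (R⁻¹ * Kᵀ)) *ᵥ w1 := by rw [hprod]
          _ = (R * K⁻¹ * a * R⁻¹)ᵀ *ᵥ u := by rw [← mulVec_mulVec, ← hu_def]
      have hppn : p ⬝ᵥ p = ‖(WithLp.equiv 2 (Fin n → ℝ)).symm p‖ ^ 2 := aux_dot_eq_sq p
      have hqqn : q ⬝ᵥ q = ‖(WithLp.equiv 2 (Fin n → ℝ)).symm q‖ ^ 2 := aux_dot_eq_sq q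
      have huun : u ⬝ᵥ u = ‖(WithLp.equiv 2 (Fin n → ℝ)).symm u‖ ^ 2 := aux_dot_eq_sq u
      have hpb : ‖(WithLp.equiv 2 (Fin n → ℝ)).symm p‖
          ≤ ζ * ‖(WithLp.equiv 2 (Fin n → ℝ)).symm u‖ := by
        rw [hNt, hzeta, ← aux_l2OpNorm_transpose]
        exact aux_opnorm_mulVec _ u
      have hqeq : q = u - p := eq_sub_of_add_eq' hupq.symm
      have hqb : ‖(WithLp.equiv 2 (Fin n → ℝ)).symm q‖
          ≤ (1 + ζ) * ‖(WithLp.equiv 2 (Fin n → ℝ)).symm u‖ := by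
        have hsub : (WithLp.equiv 2 (Fin n → ℝ)).symm q
            = (WithLp.equiv 2 (Fin n → ℝ)).symm u - (WithLp.equiv 2 (Fin n → ℝ)).symm p := by
          rw [hqeq]; rfl
        rw [hsub]
        refine le_trans (norm_sub_le _ _) ?_
        have := hpb
        linarith [norm_nonneg ((WithLp.equiv 2 (Fin n → ℝ)).symm u)]
      have hzeta0 : 0 ≤ ζ := by rw [hzeta]; exact norm_nonneg _
      have hxi : ξ = ζ ^ 2 + (1 + ζ) ^ 2 := rfl
      rw [hppn, hqqn] at hmain
      rw [huun] at hmain hupos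
      set nu := ‖(WithLp.equiv 2 (Fin n → ℝ)).symm u‖
      set np := ‖(WithLp.equiv 2 (Fin n → ℝ)).symm p‖
      set nq := ‖(WithLp.equiv 2 (Fin n → ℝ)).symm q‖
      have hnp0 : 0 ≤ np := norm_nonneg _
      have hnq0 : 0 ≤ nq := norm_nonneg _
      have hnu0 : 0 ≤ nu := norm_nonneg _
      rw [hxi]
      nlinarith [hmain, hpb, hqb, hupos, sq_nonneg nu]
  · -- ### Part (b) : the kernel dimension bound
    have hDD2 : DJ - DP = fromBlocks 0 0 0 F := by
      rw [hDJ_def, hDP_def, hI4]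
      ext i j
      cases i <;> cases j <;>
        simp [Matrix.sub_apply, Matrix.neg_apply, Matrix.add_apply]
    have hJP : Jaug - P = U * (fromBlocks 0 0 0 F) * V := by
      rw [hJfac, hPfac, ← Matrix.sub_mul, ← Matrix.mul_sub, hDD2]
    set W1 : Matrix ((Fin n ⊕ Fin n) ⊕ (Fin n ⊕ {i // i ∈ A})) ((Fin n ⊕ Fin n) ⊕ (Fin n ⊕ {i // i ∈ A})) ℝ :=
      fromBlocks 0 0 0 (fromBlocks ((α⁻¹ • (a * M⁻¹)) * PiI * Mbᵀ) 0 0 0) with hW1_def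
    set W2 : Matrix ((Fin n ⊕ Fin n) ⊕ (Fin n ⊕ {i // i ∈ A})) ((Fin n ⊕ Fin n) ⊕ (Fin n ⊕ {i // i ∈ A})) ℝ :=
      fromBlocks 0 0 0 (fromBlocks ((α⁻¹ • Mb) * PiI * (M⁻¹ * aᵀ)) 0 0 0) with hW2_def
    set Dbig : Matrix ((Fin n ⊕ Fin n) ⊕ (Fin n ⊕ {i // i ∈ A})) ((Fin n ⊕ Fin n) ⊕ (Fin n ⊕ {i // i ∈ A})) ℝ :=
      fromBlocks 0 0 0 (fromBlocks PiI 0 0 0) with hDbig_def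
    have hFsplit : (fromBlocks 0 0 0 F : Matrix ((Fin n ⊕ Fin n) ⊕ (Fin n ⊕ {i // i ∈ A})) ((Fin n ⊕ Fin n) ⊕ (Fin n ⊕ {i // i ∈ A})) ℝ) = W1 + W2 := by
      rw [hF_def, hGdecomp, hW1_def, hW2_def, fromBlocks_add, fromBlocks_add]
      simp
    have hW1fac : W1 = fromBlocks 0 0 0 (fromBlocks (α⁻¹ • (a * M⁻¹)) 0 0 0) * Dbig *
        fromBlocks 0 0 0 (fromBlocks Mbᵀ 0 0 0) := by
      rw [hW1_def, hDbig_def]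
      simp [fromBlocks_multiply]
    have hW2fac : W2 = fromBlocks 0 0 0 (fromBlocks (α⁻¹ • Mb) 0 0 0) * Dbig *
        fromBlocks 0 0 0 (fromBlocks (M⁻¹ * aᵀ) 0 0 0) := by
      rw [hW2_def, hDbig_def]
      simp [fromBlocks_multiply]
    have hW1r : W1.rank ≤ Dbig.rank := by
      rw [hW1fac]
      exact le_trans (Matrix.rank_mul_le_left _ _) (Matrix.rank_mul_le_right _ _)
    have hW2r : W2.rank ≤ Dbig.rank := by
      rw [hW2fac]
      exact le_trans (Matrix.rank_mul_le_left _ _) (Matrix.rank_mul_le_right _ _)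
    have hrank : (Jaug - P).rank ≤ 2 * Dbig.rank := by
      calc (Jaug - P).rank = (U * (fromBlocks 0 0 0 F) * V).rank := by rw [hJP]
        _ ≤ (U * (fromBlocks 0 0 0 F)).rank := Matrix.rank_mul_le_left _ _
        _ ≤ (fromBlocks 0 0 0 F : Matrix _ _ ℝ).rank := Matrix.rank_mul_le_right _ _
        _ = (W1 + W2).rank := by rw [hFsplit]
        _ ≤ W1.rank + W2.rank := aux_rank_add_le _ _
        _ ≤ 2 * Dbig.rank := by omega
    have hDrank : Dbig.rank = Fintype.card {i : Fin n // (if i ∈ A then (0:ℝ) else 1) ≠ 0} := by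
      have hb1 := fromBlocks_diagonal (fun i => if i ∈ A then (0:ℝ) else 1)
        (fun _ : {i // i ∈ A} => (0:ℝ))
      rw [diagonal_zero] at hb1
      have hb2 := fromBlocks_diagonal (fun _ : Fin n ⊕ Fin n => (0:ℝ))
        (Sum.elim (fun i => if i ∈ A then (0:ℝ) else 1) (fun _ : {i // i ∈ A} => (0:ℝ)))
      rw [diagonal_zero] at hb2
      have hD2 : Dbig = diagonal (Sum.elim (fun _ : Fin n ⊕ Fin n => (0:ℝ))
          (Sum.elim (fun i => if i ∈ A then (0:ℝ) else 1) (fun _ : {i // i ∈ A} => (0:ℝ)))) := by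
        rw [hDbig_def, ← hb2, ← hb1]
      rw [hD2, Matrix.rank_diagonal, aux_card_ne_sum, aux_card_ne_sum,
        aux_card_ne_zero, aux_card_ne_zero]
      omega
    have hfilter : (Finset.univ.filter (fun i => PiI i i = 1)).card
        = Fintype.card {i : Fin n // (if i ∈ A then (0:ℝ) else 1) ≠ 0} := by
      rw [Fintype.card_subtype]
      congr 1
      apply Finset.filter_congr
      intro i _
      have hPiIii : PiI i i = (if i ∈ A then (0:ℝ) else 1) := diagonal_apply_eq _ i
      by_cases h : i ∈ A <;> simp [hPiIii, h]
    have hrn : (Jaug - P).rank + Module.finrank ℝ (LinearMap.ker (Jaug - P).mulVecLin)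
        = 3 * n + A.card := by
      have h0 := LinearMap.finrank_range_add_finrank_ker ((Jaug - P).mulVecLin)
      have h1 : (Jaug - P).rank
          = Module.finrank ℝ (LinearMap.range (Jaug - P).mulVecLin) := rfl
      have h2 : Module.finrank ℝ (((Fin n ⊕ Fin n) ⊕ (Fin n ⊕ {i // i ∈ A})) → ℝ)
          = 3 * n + A.card := by
        rw [Module.finrank_fintype_fun_eq_card]
        simp [Fintype.card_sum]
        ring
      rw [h1, h0, h2]
    omega
end

section
/- Let A be an invertible real n×n matrix, B a real m×n matrix, C a real m×m matrix, and Ŝ an invertible real m×m matrix. Let J = [[A, Bᵀ],[B, −C]] and 𝒫 = [[I, 0],[B A⁻¹, I]] · blkdiag(A, −Ŝ) · [[I, A⁻¹ Bᵀ],[0, I]]. Then 𝒫 is invertible and 𝒫⁻¹ J = [[I, A⁻¹ Bᵀ (I − Ŝ⁻¹ S)],[0, Ŝ⁻¹ S]], where S = C + B A⁻¹ Bᵀ. -/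
open Matrix

/-- explicit form of the indefinite-preconditioned matrix,
𝒫⁻¹ J = [[I, A⁻¹Bᵀ(I − Ŝ⁻¹S)],[0, Ŝ⁻¹S]] with S = C + B A⁻¹ Bᵀ. -/
theorem stmt_16 (n m : ℕ)
    (A : Matrix (Fin n) (Fin n) ℝ) (hA : IsUnit A.det)
    (B : Matrix (Fin m) (Fin n) ℝ) (C : Matrix (Fin m) (Fin m) ℝ)
    (Sh : Matrix (Fin m) (Fin m) ℝ) (hSh : IsUnit Sh.det) :
    let J : Matrix (Fin n ⊕ Fin m) (Fin n ⊕ Fin m) ℝ :=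
      Matrix.fromBlocks A Bᵀ B (-C)
    let P : Matrix (Fin n ⊕ Fin m) (Fin n ⊕ Fin m) ℝ :=
      Matrix.fromBlocks 1 0 (B * A⁻¹) 1 *
        Matrix.fromBlocks A 0 0 (-Sh) *
        Matrix.fromBlocks 1 (A⁻¹ * Bᵀ) 0 1
    let S : Matrix (Fin m) (Fin m) ℝ := C + B * A⁻¹ * Bᵀ
    IsUnit P.det ∧
      P⁻¹ * J = Matrix.fromBlocks 1 (A⁻¹ * Bᵀ * (1 - Sh⁻¹ * S)) 0 (Sh⁻¹ * S) := by
  intro J P S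
  have hAA : A * A⁻¹ = 1 := mul_nonsing_inv A hA
  have hShSh : Sh * Sh⁻¹ = 1 := mul_nonsing_inv Sh hSh
  have hnegSh : IsUnit (-Sh).det := by
    rw [Matrix.det_neg, Fintype.card_fin]
    exact (isUnit_one.neg.pow m).mul hSh
  have hPdet : IsUnit P.det := by
    have : P.det = (Matrix.fromBlocks (1:Matrix (Fin n) (Fin n) ℝ) 0 (B * A⁻¹) 1).det *
        (Matrix.fromBlocks A 0 0 (-Sh)).det *
        (Matrix.fromBlocks (1:Matrix (Fin n) (Fin n) ℝ) (A⁻¹ * Bᵀ) 0 1).det := by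
      simp [P, Matrix.det_mul]
    rw [this, Matrix.det_fromBlocks_zero₁₂, Matrix.det_fromBlocks_zero₂₁,
      Matrix.det_fromBlocks_zero₂₁]
    simpa using hA.mul hnegSh
  refine ⟨hPdet, ?_⟩
  have key : P * Matrix.fromBlocks 1 (A⁻¹ * Bᵀ * (1 - Sh⁻¹ * S)) 0 (Sh⁻¹ * S) = J := by
    show Matrix.fromBlocks 1 0 (B * A⁻¹) 1 *
        Matrix.fromBlocks A 0 0 (-Sh) *
        Matrix.fromBlocks 1 (A⁻¹ * Bᵀ) 0 1 *
        Matrix.fromBlocks 1 (A⁻¹ * Bᵀ * (1 - Sh⁻¹ * S)) 0 (Sh⁻¹ * S) = J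
    rw [Matrix.mul_assoc, Matrix.mul_assoc, Matrix.fromBlocks_multiply,
      Matrix.fromBlocks_multiply, Matrix.fromBlocks_multiply]
    have hAiA : A⁻¹ * A = 1 := nonsing_inv_mul A hA
    have hsum : A⁻¹ * Bᵀ * (1 - Sh⁻¹ * S) + A⁻¹ * Bᵀ * (Sh⁻¹ * S) = A⁻¹ * Bᵀ := by
      rw [Matrix.mul_sub, Matrix.mul_one, sub_add_cancel]
    simp only [Matrix.one_mul, Matrix.mul_one, Matrix.zero_mul, Matrix.mul_zero,
      add_zero, zero_add]
    rw [Matrix.fromBlocks_inj]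
    refine ⟨by simp, ?_, ?_, ?_⟩
    · rw [hsum, ← Matrix.mul_assoc, hAA, Matrix.one_mul]
    · simp [Matrix.mul_assoc, hAiA]
    · rw [hsum, ← Matrix.mul_assoc, Matrix.mul_assoc B A⁻¹ A, hAiA, Matrix.mul_one,
        neg_mul, ← Matrix.mul_assoc Sh, hShSh, Matrix.one_mul, ← Matrix.mul_assoc]
      simp only [S]
      abel
  rw [← key, ← Matrix.mul_assoc, nonsing_inv_mul P hPdet, Matrix.one_mul]
end
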